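/- arXiv:2604.18580 — 9 statements merged into one kernel-verified Lean document; each statement's English description precedes it below -/
import Mathlib

section
/- Let γmax ∈ [0,1) and c₂ > 0 satisfy η := γmax·c₂ ∈ (0,1), and set β := 1 − η ∈ (0,1). Let (γ_t)_{t≥0} be real numbers with |γ_t| ≤ γmax for all t, and for each integer t ≥ 1 let (α_{t,j})_{0≤j<t} be nonnegative reals with ∑_{j=0}^{t-1} α_{t,j} ≤ 1 and α_{t,j} ≤ c₂/t for all 0 ≤ j < t. Define the scalar impulse recursion y_0 = 1 and y_t = γ_t · ∑_{j=0}^{t-1} α_{t,j} y_j for t ≥ 1. Then for every integer t ≥ 1, |y_t| ≤ η·e^η · t^{−β}. In particular y_t → 0 as t → ∞. -/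
/-- **Polynomial decay of the impulse response.**
Let `γmax ∈ [0,1)` and `c₂ > 0` with `η = γmax·c₂ ∈ (0,1)`, `β = 1 − η`.
Given gains `|γ t| ≤ γmax` and diffuse attention weights `α t j` (nonnegative,
row sums `≤ 1`, and `α t j ≤ c₂/t`), the impulse recursion
`y 0 = 1`, `y t = γ t · ∑_{j<t} α t j · y j` satisfies
`|y t| ≤ η·e^η·t^{−β}` for all `t ≥ 1`; in particular `y t → 0`. -/
theorem stmt_0
    (γmax c₂ η β : ℝ)
    (hγmax0 : 0 ≤ γmax) (hγmax1 : γmax < 1) (hc₂ : 0 < c₂)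
    (hηdef : η = γmax * c₂) (hη0 : 0 < η) (hη1 : η < 1)
    (hβdef : β = 1 - η)
    (γ : ℕ → ℝ) (hγ : ∀ t, |γ t| ≤ γmax)
    (α : ℕ → ℕ → ℝ)
    (hα_nonneg : ∀ t, 1 ≤ t → ∀ j, j < t → 0 ≤ α t j)
    (hα_sum : ∀ t, 1 ≤ t → ∑ j ∈ Finset.range t, α t j ≤ 1)
    (hα_upper : ∀ t, 1 ≤ t → ∀ j, j < t → α t j ≤ c₂ / (t : ℝ))
    (y : ℕ → ℝ)
    (hy0 : y 0 = 1)
    (hyt : ∀ t, 1 ≤ t → y t = γ t * ∑ j ∈ Finset.range t, α t j * y j) :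
    (∀ t : ℕ, 1 ≤ t → |y t| ≤ η * Real.exp η * (t : ℝ) ^ (-β)) ∧
      Filter.Tendsto y Filter.atTop (nhds 0) := by
  -- the product Q n = ∏_{k=1}^n (1 + η/k)
  set Q : ℕ → ℝ := fun n => ∏ k ∈ Finset.range n, (1 + η / (k + 1)) with hQ
  -- the inductive bound b
  set b : ℕ → ℝ := fun j => if j = 0 then 1 else η * Q (j - 1) / j with hb
  have hQ0 : Q 0 = 1 := by simp [hQ]
  have hQ1le : ∀ n, 1 ≤ Q n := by
    intro n
    induction n with
    | zero => simp [hQ]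
    | succ n ih =>
      have hQs : Q (n + 1) = Q n * (1 + η / (n + 1)) := Finset.prod_range_succ _ _
      have h1 : (0:ℝ) ≤ η / (n + 1) := by positivity
      rw [hQs]
      nlinarith
  have hbnonneg : ∀ j, 0 ≤ b j := by
    intro j
    rcases Nat.eq_zero_or_pos j with h | h
    · simp [hb, h]
    · have := hQ1le (j - 1)
      have hj : (0:ℝ) < j := by exact_mod_cast h
      simp only [hb, if_neg (Nat.pos_iff_ne_zero.mp h)]
      positivity
  -- sum identity: ∑_{j<n+1} b j = Q n
  have hsum : ∀ n : ℕ, ∑ j ∈ Finset.range (n + 1), b j = Q n := by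
    intro n
    induction n with
    | zero => simp [hb, hQ]
    | succ n ih =>
      rw [Finset.sum_range_succ, ih]
      have hb1 : b (n + 1) = η * Q n / (n + 1) := by simp [hb]
      have hQs : Q (n + 1) = Q n * (1 + η / (n + 1)) := Finset.prod_range_succ _ _
      have hn1 : ((n:ℝ) + 1) ≠ 0 := by positivity
      rw [hb1, hQs]
      push_cast
      field_simp
  -- key induction: |y t| ≤ b t
  have hkey : ∀ t : ℕ, |y t| ≤ b t := by
    intro t
    induction t using Nat.strong_induction_on with
    | _ t ih =>
      rcases Nat.eq_zero_or_pos t with rfl | ht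
      · simp [hy0, hb]
      · have ht1 : 1 ≤ t := ht
        have htR : (0:ℝ) < t := by exact_mod_cast ht
        rw [hyt t ht1]
        rw [abs_mul]
        have hS : |∑ j ∈ Finset.range t, α t j * y j| ≤
            ∑ j ∈ Finset.range t, c₂ / t * b j := by
          refine (Finset.abs_sum_le_sum_abs _ _).trans ?_
          refine Finset.sum_le_sum fun j hj => ?_
          rw [Finset.mem_range] at hj
          rw [abs_mul, abs_of_nonneg (hα_nonneg t ht1 j hj)]
          exact mul_le_mul (hα_upper t ht1 j hj) (ih j hj) (abs_nonneg _)
            (by positivity)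
        calc |γ t| * |∑ j ∈ Finset.range t, α t j * y j|
            ≤ γmax * ∑ j ∈ Finset.range t, c₂ / t * b j := by
              refine mul_le_mul (hγ t) hS (abs_nonneg _) hγmax0
          _ = γmax * (c₂ / t * ∑ j ∈ Finset.range t, b j) := by
              congr 1
              rw [Finset.mul_sum]
          _ = b t := by
              obtain ⟨m, rfl⟩ := Nat.exists_eq_add_of_le ht1
              rw [add_comm 1 m] at *
              rw [hsum m]
              have : b (m + 1) = η * Q m / (m + 1) := by simp [hb]
              rw [this, hηdef]
              field_simp
              push_cast
              ring
  -- bound b t ≤ η e^η t^(-β) for t ≥ 1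
  have hQexp : ∀ n : ℕ, Q n ≤ Real.exp (η * harmonic n) := by
    intro n
    have : Q n ≤ ∏ k ∈ Finset.range n, Real.exp (η / (k + 1)) := by
      refine Finset.prod_le_prod (fun k _ => ?_) (fun k _ => ?_)
      · have : (0:ℝ) ≤ η / (k + 1) := by positivity
        linarith
      · have := Real.add_one_le_exp (η / (k + 1))
        linarith
    refine this.trans ?_
    rw [← Real.exp_sum]
    apply le_of_eq
    congr 1
    rw [harmonic]
    push_cast
    rw [Finset.mul_sum]
    refine Finset.sum_congr rfl fun k _ => ?_
    rw [div_eq_mul_inv]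
  have hbound : ∀ t : ℕ, 1 ≤ t → b t ≤ η * Real.exp η * (t : ℝ) ^ (-β) := by
    intro t ht1
    have htR : (0:ℝ) < t := by exact_mod_cast ht1
    have hQle : Q (t - 1) ≤ Real.exp η * (t : ℝ) ^ (η : ℝ) := by
      rcases eq_or_lt_of_le ht1 with h | h
      · have : t = 1 := h.symm
        subst this
        simp only [Nat.sub_self, hQ0]
        have h1 : (1:ℝ) ≤ Real.exp η := by
          have := Real.add_one_le_exp η; linarith
        have h2 : ((1:ℕ):ℝ) ^ (η:ℝ) = 1 := by norm_num
        rw [h2]; linarith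
      · -- t ≥ 2
        have hn1 : 1 ≤ t - 1 := by omega
        have hnR : (0:ℝ) < ((t - 1 : ℕ) : ℝ) := by exact_mod_cast hn1
        calc Q (t - 1) ≤ Real.exp (η * harmonic (t - 1)) := hQexp _
          _ ≤ Real.exp (η * (1 + Real.log (t - 1 : ℕ))) := by
              apply Real.exp_le_exp.mpr
              exact mul_le_mul_of_nonneg_left (harmonic_le_one_add_log _) hη0.le
          _ = Real.exp η * Real.exp (η * Real.log (t - 1 : ℕ)) := by
              rw [← Real.exp_add]; ring_nf
          _ = Real.exp η * ((t - 1 : ℕ) : ℝ) ^ (η : ℝ) := by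
              rw [Real.rpow_def_of_pos hnR]; ring_nf
          _ ≤ Real.exp η * (t : ℝ) ^ (η : ℝ) := by
              refine mul_le_mul_of_nonneg_left ?_ (Real.exp_pos η).le
              refine Real.rpow_le_rpow hnR.le ?_ hη0.le
              exact_mod_cast Nat.sub_le t 1
    have hbt : b t = η * Q (t - 1) / t := by
      simp [hb, Nat.pos_iff_ne_zero.mp ht1]
    rw [hbt]
    have hrpow : (t : ℝ) ^ (-β) = (t : ℝ) ^ (η : ℝ) / t := by
      rw [hβdef]
      rw [show -(1 - η) = η + (-1) by ring, Real.rpow_add htR,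
        Real.rpow_neg_one, div_eq_mul_inv]
    rw [hrpow, show η * Real.exp η * ((t:ℝ) ^ (η:ℝ) / t)
        = η * (Real.exp η * (t:ℝ) ^ (η:ℝ)) / t by ring]
    gcongr
  have hmain : ∀ t : ℕ, 1 ≤ t → |y t| ≤ η * Real.exp η * (t : ℝ) ^ (-β) :=
    fun t ht => (hkey t).trans (hbound t ht)
  refine ⟨hmain, ?_⟩
  -- tendsto
  have hβ0 : 0 < β := by rw [hβdef]; linarith
  have hg : Filter.Tendsto (fun t : ℕ => η * Real.exp η * (t : ℝ) ^ (-β))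
      Filter.atTop (nhds 0) := by
    have h1 : Filter.Tendsto (fun t : ℕ => ((t : ℝ)) ^ (-β))
        Filter.atTop (nhds 0) :=
      (tendsto_rpow_neg_atTop hβ0).comp tendsto_natCast_atTop_atTop
    simpa using h1.const_mul (η * Real.exp η)
  refine squeeze_zero_norm' ?_ hg
  filter_upwards [Filter.eventually_ge_atTop 1] with t ht
  simpa [Real.norm_eq_abs] using hmain t ht
end

section
/- Let γmax ∈ [0,1) and c₂ > 0 satisfy η := γmax·c₂ ∈ (0,1), and set β := 1 − η ∈ (0,1). Let (γ_t)_{t≥0} be real numbers with |γ_t| ≤ γmax, and for each integer t ≥ 1 let (α_{t,j})_{0≤j<t} be nonnegative reals with ∑_{j=0}^{t-1} α_{t,j} ≤ 1 and α_{t,j} ≤ c₂/t for all 0 ≤ j < t. Fix an integer j₀ ≥ 0 and define y_t = 0 for t < j₀, y_{j₀} = 1, and y_t = γ_t · ∑_{k=0}^{t-1} α_{t,k} y_k for t > j₀. Then for every integer t > j₀, |y_t| ≤ η·e^η · (t − j₀)^{−β}. -/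
noncomputable def auxT (η : ℝ) (j₀ : ℕ) (n : ℕ) : ℝ :=
  ∏ m ∈ Finset.range n, (1 + η / ((j₀ : ℝ) + m + 1))

lemma auxT_succ (η : ℝ) (j₀ N : ℕ) :
    auxT η j₀ (N + 1) = auxT η j₀ N * (1 + η / ((j₀ : ℝ) + N + 1)) :=
  Finset.prod_range_succ _ _

lemma auxT_one_le (η : ℝ) (hη : 0 ≤ η) (j₀ : ℕ) : ∀ n, 1 ≤ auxT η j₀ n := by
  intro n
  induction n with
  | zero => simp [auxT]
  | succ n ih =>
    rw [auxT_succ]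
    have h1 : (0:ℝ) < (j₀ : ℝ) + n + 1 := by positivity
    have h2 : 0 ≤ η / ((j₀ : ℝ) + n + 1) := by positivity
    nlinarith

lemma auxT_eq (η : ℝ) (j₀ : ℕ) :
    ∀ N, auxT η j₀ N = 1 + ∑ m ∈ Finset.range N, η / ((j₀ : ℝ) + m + 1) * auxT η j₀ m := by
  intro N
  induction N with
  | zero => simp [auxT]
  | succ N ih =>
    rw [auxT_succ, Finset.sum_range_succ, ih]
    ring

lemma auxT_le_exp (η : ℝ) (hη : 0 ≤ η) (j₀ n : ℕ) :
    auxT η j₀ n ≤ Real.exp (∑ m ∈ Finset.range n, η / ((j₀ : ℝ) + m + 1)) := by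
  rw [Real.exp_sum]
  apply Finset.prod_le_prod
  · intro m _
    have h1 : (0:ℝ) < (j₀ : ℝ) + m + 1 := by positivity
    have h2 : 0 ≤ η / ((j₀ : ℝ) + m + 1) := by positivity
    linarith
  · intro m _
    have := Real.add_one_le_exp (η / ((j₀ : ℝ) + m + 1))
    linarith

lemma log_telescope (x : ℝ) (hx : 0 < x) : 1/(x+1) ≤ Real.log (x+1) - Real.log x := by
  have h1 : (0:ℝ) < x + 1 := by linarith
  have h := Real.log_le_sub_one_of_pos (show 0 < x / (x+1) by positivity)
  rw [Real.log_div (ne_of_gt hx) (ne_of_gt h1)] at h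
  have h2 : x / (x+1) - 1 = -(1/(x+1)) := by field_simp; ring
  rw [h2] at h
  linarith

lemma auxT_div_le (η : ℝ) (hη : 0 ≤ η) (j₀ n : ℕ) (hn : 1 ≤ n) :
    auxT η j₀ (n-1) / ((j₀ : ℝ) + n) ≤ Real.exp η * (n : ℝ) ^ (η - 1) := by
  have hexp1 : (1:ℝ) ≤ Real.exp η := Real.one_le_exp hη
  rcases eq_or_lt_of_le hn with h1 | h2
  · -- n = 1
    rw [← h1]
    simp only [auxT, Nat.sub_self, Finset.range_zero, Finset.prod_empty, Nat.cast_one]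
    rw [Real.one_rpow]
    have hj : (1:ℝ) ≤ (j₀ : ℝ) + 1 := by
      have : (0:ℝ) ≤ (j₀:ℝ) := Nat.cast_nonneg j₀
      linarith
    calc 1 / ((j₀ : ℝ) + 1) ≤ 1 := by
          rw [div_le_one (by positivity)]; exact hj
      _ ≤ Real.exp η * 1 := by rw [mul_one]; exact hexp1
  · -- 2 ≤ n
    obtain ⟨N, rfl⟩ : ∃ N, n = N + 2 := ⟨n - 2, by omega⟩
    have hNsub : N + 2 - 1 = N + 1 := by omega
    rw [hNsub]
    set a : ℝ := (j₀ : ℝ) + N + 1 with ha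
    set c : ℝ := (j₀ : ℝ) + 1 with hc
    have hapos : 0 < a := by rw [ha]; positivity
    have hcpos : 0 < c := by rw [hc]; positivity
    set f : ℕ → ℝ := fun m => η * Real.log ((j₀ : ℝ) + m + 1) with hf
    -- bound the exponent sum
    have hSle : ∑ m ∈ Finset.range (N+1), η / ((j₀ : ℝ) + m + 1)
        ≤ η + (η * Real.log a - η * Real.log c) := by
      rw [Finset.sum_range_succ']
      have hfirst : η / ((j₀ : ℝ) + ((0:ℕ):ℝ) + 1) ≤ η := by
        apply div_le_self hη
        have : (0:ℝ) ≤ (j₀:ℝ) := Nat.cast_nonneg j₀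
        simp only [Nat.cast_zero]
        linarith
      have hrest : ∑ m ∈ Finset.range N, η / ((j₀ : ℝ) + ((m+1 : ℕ):ℝ) + 1)
          ≤ ∑ m ∈ Finset.range N, (f (m+1) - f m) := by
        apply Finset.sum_le_sum
        intro m _
        have hx : (0:ℝ) < (j₀ : ℝ) + m + 1 := by positivity
        have h3 := mul_le_mul_of_nonneg_left (log_telescope ((j₀ : ℝ) + m + 1) hx) hη
        rw [mul_one_div] at h3
        have e1 : (j₀ : ℝ) + ((m+1 : ℕ):ℝ) + 1 = ((j₀ : ℝ) + m + 1) + 1 := by push_cast; ring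
        simp only [hf, e1]
        linarith
      rw [Finset.sum_range_sub f N] at hrest
      have hfN : f N = η * Real.log a := by rw [hf, ha]
      have hf0 : f 0 = η * Real.log c := by simp [hf, hc]
      rw [hfN, hf0] at hrest
      linarith
    have hT := (auxT_le_exp η hη j₀ (N+1)).trans (Real.exp_le_exp.mpr hSle)
    have hexp_eq : Real.exp (η + (η * Real.log a - η * Real.log c))
        = Real.exp η * (a / c) ^ η := by
      rw [Real.rpow_def_of_pos (by positivity : (0:ℝ) < a / c),
        Real.log_div (ne_of_gt hapos) (ne_of_gt hcpos), ← Real.exp_add]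
      ring_nf
    rw [hexp_eq] at hT
    -- final comparison
    have hn2 : ((N + 2 : ℕ) : ℝ) = (N:ℝ) + 2 := by push_cast; ring
    have hjn : (0:ℝ) < (j₀ : ℝ) + ((N + 2 : ℕ) : ℝ) := by rw [hn2]; positivity
    have hr : a / c ≤ (N:ℝ) + 2 := by
      rw [div_le_iff₀ hcpos, ha, hc]
      have h0 : (0:ℝ) ≤ (N:ℝ) := Nat.cast_nonneg N
      have hj0 : (0:ℝ) ≤ (j₀:ℝ) := Nat.cast_nonneg j₀
      nlinarith
    have hrpow : (a / c) ^ η ≤ ((N:ℝ) + 2) ^ η :=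
      Real.rpow_le_rpow (by positivity) hr hη
    have hfin : (((N:ℝ) + 2)) ^ (η - 1) = ((N:ℝ) + 2) ^ η / ((N:ℝ) + 2) := by
      rw [Real.rpow_sub (by positivity), Real.rpow_one]
    calc auxT η j₀ (N+1) / ((j₀ : ℝ) + ((N + 2 : ℕ) : ℝ))
        ≤ (Real.exp η * (a / c) ^ η) / ((j₀ : ℝ) + ((N + 2 : ℕ) : ℝ)) := by
          gcongr
      _ = Real.exp η * ((a / c) ^ η / ((j₀ : ℝ) + ((N + 2 : ℕ) : ℝ))) := by ring
      _ ≤ Real.exp η * (((N:ℝ) + 2) ^ η / ((N:ℝ) + 2)) := by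
          apply mul_le_mul_of_nonneg_left _ (Real.exp_pos η).le
          rw [hn2]
          apply div_le_div₀ (by positivity) hrpow (by positivity)
          linarith [Nat.cast_nonneg (α := ℝ) j₀]
      _ = Real.exp η * ((N + 2 : ℕ) : ℝ) ^ (η - 1) := by rw [hn2, hfin]

/-- **Polynomial decay from an impulse at an arbitrary source position `j₀`.**
Under the same diffuse-routing assumptions as for the impulse at `0`, if the
unit impulse is injected at time `j₀` (with `y t = 0` for `t < j₀`,
`y j₀ = 1`, and `y t = γ t · ∑_{k<t} α t k · y k` for `t > j₀`) then
`|y t| ≤ η·e^η·(t − j₀)^{−β}` for every `t > j₀`. -/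
theorem stmt_1
    (γmax c₂ η β : ℝ)
    (hγmax0 : 0 ≤ γmax) (hγmax1 : γmax < 1) (hc₂ : 0 < c₂)
    (hηdef : η = γmax * c₂) (hη0 : 0 < η) (hη1 : η < 1)
    (hβdef : β = 1 - η)
    (γ : ℕ → ℝ) (hγ : ∀ t, |γ t| ≤ γmax)
    (α : ℕ → ℕ → ℝ)
    (hα_nonneg : ∀ t, 1 ≤ t → ∀ j, j < t → 0 ≤ α t j)
    (hα_sum : ∀ t, 1 ≤ t → ∑ j ∈ Finset.range t, α t j ≤ 1)
    (hα_upper : ∀ t, 1 ≤ t → ∀ j, j < t → α t j ≤ c₂ / (t : ℝ))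
    (j₀ : ℕ)
    (y : ℕ → ℝ)
    (hy_lt : ∀ t, t < j₀ → y t = 0)
    (hyj₀ : y j₀ = 1)
    (hyt : ∀ t, j₀ < t → y t = γ t * ∑ k ∈ Finset.range t, α t k * y k) :
    ∀ t : ℕ, j₀ < t → |y t| ≤ η * Real.exp η * ((t - j₀ : ℕ) : ℝ) ^ (-β) := by
  have key : ∀ n, 1 ≤ n → |y (j₀ + n)| ≤ η / ((j₀ + n : ℕ) : ℝ) * auxT η j₀ (n - 1) := by
    intro n
    induction n using Nat.strong_induction_on with
    | _ n IH =>
      intro hn1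
      obtain ⟨N, rfl⟩ : ∃ N, n = N + 1 := ⟨n - 1, by omega⟩
      have ht1 : 1 ≤ j₀ + (N + 1) := by omega
      have htpos : (0:ℝ) < ((j₀ + (N + 1) : ℕ) : ℝ) := by
        exact_mod_cast Nat.pos_of_ne_zero (by omega)
      -- step 1: bound the weighted sum of absolute values
      have hsum : ∑ k ∈ Finset.range (j₀ + (N+1)), α (j₀ + (N+1)) k * |y k|
          ≤ (c₂ / ((j₀ + (N+1) : ℕ) : ℝ)) * auxT η j₀ N := by
        have hsplit : ∑ k ∈ Finset.range (j₀ + (N+1)), α (j₀ + (N+1)) k * |y k|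
            = ∑ k ∈ Finset.Ico j₀ (j₀ + (N+1)), α (j₀ + (N+1)) k * |y k| := by
          rw [Finset.range_eq_Ico,
            ← Finset.sum_Ico_consecutive _ (Nat.zero_le j₀) (by omega : j₀ ≤ j₀ + (N+1))]
          have hz : ∑ k ∈ Finset.Ico 0 j₀, α (j₀ + (N+1)) k * |y k| = 0 := by
            apply Finset.sum_eq_zero
            intro k hk
            rw [hy_lt k (by simpa using (Finset.mem_Ico.mp hk).2), abs_zero, mul_zero]
          rw [hz, zero_add]
        rw [hsplit, Finset.sum_Ico_eq_sum_range]
        have hlen : j₀ + (N+1) - j₀ = N + 1 := by omega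
        rw [hlen, Finset.sum_range_succ']
        have hfirst : α (j₀ + (N+1)) (j₀ + 0) * |y (j₀ + 0)|
            ≤ c₂ / ((j₀ + (N+1) : ℕ) : ℝ) := by
          simp only [Nat.add_zero, hyj₀, abs_one, mul_one]
          exact hα_upper (j₀ + (N+1)) ht1 j₀ (by omega)
        have hrest : ∑ i ∈ Finset.range N, α (j₀ + (N+1)) (j₀ + (i + 1)) * |y (j₀ + (i + 1))|
            ≤ ∑ i ∈ Finset.range N,
                (c₂ / ((j₀ + (N+1) : ℕ) : ℝ)) * (η / ((j₀ : ℝ) + i + 1) * auxT η j₀ i) := by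
          apply Finset.sum_le_sum
          intro i hi
          have hiN : i < N := Finset.mem_range.mp hi
          have hIH := IH (i+1) (by omega) (by omega)
          have hIH' : |y (j₀ + (i+1))| ≤ η / ((j₀ : ℝ) + i + 1) * auxT η j₀ i := by
            have hcast : ((j₀ + (i+1) : ℕ) : ℝ) = (j₀ : ℝ) + i + 1 := by push_cast; ring
            rw [hcast] at hIH
            simpa using hIH
          have hαle : α (j₀ + (N+1)) (j₀ + (i+1)) ≤ c₂ / ((j₀ + (N+1) : ℕ) : ℝ) :=
            hα_upper (j₀ + (N+1)) ht1 (j₀ + (i+1)) (by omega)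
          have hαnn : 0 ≤ α (j₀ + (N+1)) (j₀ + (i+1)) :=
            hα_nonneg _ ht1 _ (by omega)
          have hc2t : (0:ℝ) ≤ c₂ / ((j₀ + (N+1) : ℕ) : ℝ) := by positivity
          exact mul_le_mul hαle hIH' (abs_nonneg _) hc2t
        calc (∑ i ∈ Finset.range N, α (j₀ + (N+1)) (j₀ + (i + 1)) * |y (j₀ + (i + 1))|)
              + α (j₀ + (N+1)) (j₀ + 0) * |y (j₀ + 0)|
            ≤ (∑ i ∈ Finset.range N,
                (c₂ / ((j₀ + (N+1) : ℕ) : ℝ)) * (η / ((j₀ : ℝ) + i + 1) * auxT η j₀ i))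
              + c₂ / ((j₀ + (N+1) : ℕ) : ℝ) := add_le_add hrest hfirst
          _ = (c₂ / ((j₀ + (N+1) : ℕ) : ℝ))
              * (1 + ∑ i ∈ Finset.range N, η / ((j₀ : ℝ) + i + 1) * auxT η j₀ i) := by
              rw [← Finset.mul_sum]; ring
          _ = (c₂ / ((j₀ + (N+1) : ℕ) : ℝ)) * auxT η j₀ N := by rw [← auxT_eq]
      have hTnn : (0:ℝ) ≤ auxT η j₀ N := le_trans zero_le_one (auxT_one_le η hη0.le j₀ N)
      calc |y (j₀ + (N+1))|
          = |γ (j₀ + (N+1))| * |∑ k ∈ Finset.range (j₀ + (N+1)), α (j₀ + (N+1)) k * y k| := by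
            rw [hyt _ (by omega), abs_mul]
        _ ≤ γmax * ∑ k ∈ Finset.range (j₀ + (N+1)), α (j₀ + (N+1)) k * |y k| := by
            apply mul_le_mul (hγ _) _ (abs_nonneg _) hγmax0
            refine (Finset.abs_sum_le_sum_abs _ _).trans ?_
            apply le_of_eq
            apply Finset.sum_congr rfl
            intro k hk
            rw [abs_mul, abs_of_nonneg (hα_nonneg _ ht1 k (Finset.mem_range.mp hk))]
        _ ≤ γmax * ((c₂ / ((j₀ + (N+1) : ℕ) : ℝ)) * auxT η j₀ N) :=
            mul_le_mul_of_nonneg_left hsum hγmax0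
        _ = η / ((j₀ + (N+1) : ℕ) : ℝ) * auxT η j₀ (N + 1 - 1) := by
            rw [hηdef, show N + 1 - 1 = N from rfl]
            ring
  intro t ht
  obtain ⟨n, hn1, rfl⟩ : ∃ n, 1 ≤ n ∧ t = j₀ + n := ⟨t - j₀, by omega, by omega⟩
  have hcancel : j₀ + n - j₀ = n := by omega
  have hβ : -β = η - 1 := by rw [hβdef]; ring
  rw [hcancel, hβ]
  have h1 := key n hn1
  have h2 := auxT_div_le η hη0.le j₀ n hn1
  have hcast : ((j₀ + n : ℕ) : ℝ) = (j₀ : ℝ) + n := by push_cast; ring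
  calc |y (j₀ + n)| ≤ η / ((j₀ + n : ℕ) : ℝ) * auxT η j₀ (n - 1) := h1
    _ = η * (auxT η j₀ (n - 1) / ((j₀ : ℝ) + n)) := by rw [hcast]; ring
    _ ≤ η * (Real.exp η * (n : ℝ) ^ (η - 1)) := mul_le_mul_of_nonneg_left h2 hη0.le
    _ = η * Real.exp η * (n : ℝ) ^ (η - 1) := by ring
end

section
/- Let T ≥ 1 and let B ∈ ℝ^{T×T} (indices 0,…,T−1) be strictly lower triangular with entries B_{t,j} = γ_t·α_{t,j} for j < t and B_{t,j} = 0 for j ≥ t, where for every t ≥ 1 the weights satisfy α_{t,j} ≥ 0, ∑_{j=0}^{t-1} α_{t,j} = 1, and α_{t,j} ≤ c₂/t for all j < t, and where |γ_t| ≤ γmax for all t, with η := γmax·c₂ ∈ (0,1) and β := 1 − η ∈ (0,1). Then K := (I − B)^{-1} exists, is lower triangular with K_{t,t} = 1 and K_{t,k} = 0 for t < k, and satisfies |K_{t,k}| ≤ η·e^η · (t − k)^{−β} for all 0 ≤ k < t ≤ T−1. -/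
/-- **Polynomial tail of the inverse kernel entries (finite horizon).**
Let `B` be the `T×T` strictly lower-triangular matrix with entries
`B t j = γ t · α t j` for `j < t`, where each row `(α t j)_{j<t}` is a
probability vector bounded by `c₂/t`, and `|γ t| ≤ γmax`, with
`η = γmax·c₂ ∈ (0,1)` and `β = 1 − η`.  Then `I − B` is invertible,
`K = (I − B)⁻¹` is lower triangular with unit diagonal, and
`|K t k| ≤ η·e^η·(t−k)^{−β}` for all `k < t`. -/
theorem stmt_3
    (T : ℕ) (hT : 1 ≤ T)
    (γmax c₂ η β : ℝ)
    (γ : Fin T → ℝ) (α : Fin T → Fin T → ℝ)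
    (hα_nonneg : ∀ t : Fin T, 1 ≤ (t : ℕ) → ∀ j : Fin T, (j : ℕ) < (t : ℕ) → 0 ≤ α t j)
    (hα_sum : ∀ t : Fin T, 1 ≤ (t : ℕ) →
      ∑ j ∈ Finset.univ.filter (fun j : Fin T => (j : ℕ) < (t : ℕ)), α t j = 1)
    (hα_upper : ∀ t : Fin T, 1 ≤ (t : ℕ) → ∀ j : Fin T, (j : ℕ) < (t : ℕ) →
      α t j ≤ c₂ / ((t : ℕ) : ℝ))
    (hγ : ∀ t : Fin T, |γ t| ≤ γmax)
    (hηdef : η = γmax * c₂) (hη0 : 0 < η) (hη1 : η < 1)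
    (hβdef : β = 1 - η)
    (B : Matrix (Fin T) (Fin T) ℝ)
    (hB : ∀ t j : Fin T, B t j = if (j : ℕ) < (t : ℕ) then γ t * α t j else 0) :
    IsUnit (1 - B) ∧
    (∀ t : Fin T, (1 - B)⁻¹ t t = 1) ∧
    (∀ t k : Fin T, (t : ℕ) < (k : ℕ) → (1 - B)⁻¹ t k = 0) ∧
    (∀ t k : Fin T, (k : ℕ) < (t : ℕ) →
      |(1 - B)⁻¹ t k| ≤ η * Real.exp η * (((t : ℕ) : ℝ) - ((k : ℕ) : ℝ)) ^ (-β)) := by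
  have hγ0 : 0 ≤ γmax := le_trans (abs_nonneg _) (hγ ⟨0, hT⟩)
  -- strict lower triangularity
  have hBz : ∀ t j : Fin T, (t : ℕ) ≤ (j : ℕ) → B t j = 0 := by
    intro t j h; rw [hB, if_neg (by omega)]
  -- nilpotency
  have hpow : ∀ m : ℕ, ∀ t k : Fin T, (t : ℕ) < (k : ℕ) + m → (B ^ m) t k = 0 := by
    intro m
    induction m with
    | zero =>
      intro t k h
      rw [pow_zero, Matrix.one_apply_ne]
      intro he; rw [he] at h; omega
    | succ m ih =>
      intro t k h
      rw [pow_succ', Matrix.mul_apply]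
      apply Finset.sum_eq_zero
      intro j _
      by_cases hj : (j : ℕ) < (t : ℕ)
      · rw [ih j k (by omega), mul_zero]
      · rw [hBz t j (by omega), zero_mul]
  have hnil : IsNilpotent B := ⟨T, by ext t k; exact hpow T t k (by omega)⟩
  have hu : IsUnit (1 - B) := hnil.isUnit_one_sub
  set K := (1 - B)⁻¹ with hKdef
  have hdet : IsUnit (1 - B).det := (Matrix.isUnit_iff_isUnit_det _).mp hu
  have hmul : (1 - B) * K = 1 := Matrix.mul_nonsing_inv _ hdet
  have hKeq : K = 1 + B * K := by
    have : K - B * K = 1 := by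
      calc K - B * K = (1 - B) * K := by rw [sub_mul, one_mul]
        _ = 1 := hmul
    have h2 := this
    calc K = (K - B * K) + B * K := by abel
      _ = 1 + B * K := by rw [h2]
  have hrec : ∀ t k : Fin T, K t k = (if t = k then (1 : ℝ) else 0) + ∑ j, B t j * K j k := by
    intro t k
    conv_lhs => rw [hKeq]
    rw [Matrix.add_apply, Matrix.mul_apply, Matrix.one_apply]
  -- entrywise bound on B
  have hBabs : ∀ t j : Fin T, |B t j| ≤ η / ((t : ℕ) : ℝ) := by
    intro t j
    rw [hB]
    by_cases hj : (j : ℕ) < (t : ℕ)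
    · rw [if_pos hj]
      have ht1 : 1 ≤ (t : ℕ) := by omega
      have hα0 := hα_nonneg t ht1 j hj
      have hαu := hα_upper t ht1 j hj
      rw [abs_mul, abs_of_nonneg hα0]
      calc |γ t| * α t j ≤ γmax * (c₂ / ((t : ℕ) : ℝ)) :=
            mul_le_mul (hγ t) hαu hα0 hγ0
        _ = η / ((t : ℕ) : ℝ) := by rw [hηdef]; ring
    · rw [if_neg hj, abs_zero]
      positivity
  -- the majorant sequence
  set P : ℕ → ℝ := fun n => (η / (n : ℝ)) * ∏ j ∈ Finset.Ico 1 n, (1 + η / (j : ℝ))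
    with hPdef
  have hprod1 : ∀ n : ℕ, (1 : ℝ) ≤ ∏ j ∈ Finset.Ico 1 n, (1 + η / (j : ℝ)) := by
    intro n
    calc (1:ℝ) = ∏ _j ∈ Finset.Ico 1 n, (1:ℝ) := (Finset.prod_const_one).symm
      _ ≤ ∏ j ∈ Finset.Ico 1 n, (1 + η / (j : ℝ)) := by
          apply Finset.prod_le_prod
          · intro j _; norm_num
          · intro j _; nlinarith [div_nonneg hη0.le (Nat.cast_nonneg (α := ℝ) j)]
  have hP0 : ∀ n : ℕ, 0 ≤ P n := by
    intro n
    apply mul_nonneg (by positivity)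
    linarith [hprod1 n]
  have hPsum : ∀ n : ℕ, 1 + ∑ j ∈ Finset.Ico 1 n, P j
      = ∏ j ∈ Finset.Ico 1 n, (1 + η / (j : ℝ)) := by
    intro n
    induction n with
    | zero => simp
    | succ n ihn =>
      rcases Nat.eq_zero_or_pos n with h0 | h1
      · subst h0; simp
      · rw [Finset.sum_Ico_succ_top h1, Finset.prod_Ico_succ_top h1]
        have hPn : P n = (η / (n : ℝ)) * ∏ j ∈ Finset.Ico 1 n, (1 + η / (j : ℝ)) := rfl
        rw [← add_assoc, hPn]
        nlinarith [ihn]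
  -- product bound via harmonic numbers
  have hprodle : ∀ n : ℕ, 1 ≤ n →
      ∏ j ∈ Finset.Ico 1 n, (1 + η / (j : ℝ)) ≤ Real.exp η * (n : ℝ) ^ η := by
    intro n hn
    have step1 : ∏ j ∈ Finset.Ico 1 n, (1 + η / (j : ℝ))
        ≤ Real.exp (∑ j ∈ Finset.Ico 1 n, η / (j : ℝ)) := by
      rw [Real.exp_sum]
      apply Finset.prod_le_prod
      · intro j _; nlinarith [div_nonneg hη0.le (Nat.cast_nonneg (α := ℝ) j)]
      · intro j _
        have := Real.add_one_le_exp (η / (j : ℝ))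
        linarith
    have hharm : ∑ j ∈ Finset.Ico 1 n, ((j : ℝ))⁻¹ = ((harmonic (n - 1) : ℚ) : ℝ) := by
      rw [Finset.sum_Ico_eq_sum_range]
      rw [harmonic]
      push_cast
      apply Finset.sum_congr rfl
      intro i _
      rw [add_comm]
    have hmono : ((harmonic (n - 1) : ℚ) : ℝ) ≤ ((harmonic n : ℚ) : ℝ) := by
      have h2 : harmonic (n - 1) ≤ harmonic n := by
        conv_rhs => rw [show n = (n - 1) + 1 by omega, harmonic_succ]
        have : (0:ℚ) ≤ (((n - 1) + 1 : ℕ) : ℚ)⁻¹ := by positivity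
        linarith
      exact_mod_cast h2
    have hlog : ((harmonic n : ℚ) : ℝ) ≤ 1 + Real.log n := harmonic_le_one_add_log n
    have hsum2 : ∑ j ∈ Finset.Ico 1 n, η / (j : ℝ)
        = η * ∑ j ∈ Finset.Ico 1 n, ((j : ℝ))⁻¹ := by
      rw [Finset.mul_sum]
      apply Finset.sum_congr rfl
      intro j _; rw [div_eq_mul_inv]
    have hnpos : (0 : ℝ) < (n : ℝ) := by exact_mod_cast hn
    calc ∏ j ∈ Finset.Ico 1 n, (1 + η / (j : ℝ))
        ≤ Real.exp (∑ j ∈ Finset.Ico 1 n, η / (j : ℝ)) := step1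
      _ ≤ Real.exp (η * (1 + Real.log n)) := by
          apply Real.exp_le_exp.mpr
          rw [hsum2]
          apply mul_le_mul_of_nonneg_left _ hη0.le
          rw [hharm]; linarith
      _ = Real.exp η * (n : ℝ) ^ η := by
          rw [Real.rpow_def_of_pos hnpos, ← Real.exp_add]
          ring_nf
  -- main strong induction
  have main : ∀ n : ℕ, ∀ t : Fin T, (t : ℕ) = n →
      ((∀ k : Fin T, (t : ℕ) < (k : ℕ) → K t k = 0) ∧ K t t = 1 ∧
       (∀ k : Fin T, (k : ℕ) < (t : ℕ) → |K t k| ≤ P (t : ℕ))) := by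
    intro n
    induction n using Nat.strong_induction_on with
    | _ n ih =>
    intro t ht
    have haux : ∀ j k : Fin T, (j : ℕ) < n → (j : ℕ) < (k : ℕ) → K j k = 0 :=
      fun j k hj hjk => (ih _ hj j rfl).1 k hjk
    refine ⟨?_, ?_, ?_⟩
    · intro k hk
      rw [hrec t k, if_neg (by intro he; rw [he] at hk; omega), zero_add]
      apply Finset.sum_eq_zero
      intro j _
      by_cases hj : (j : ℕ) < (t : ℕ)
      · rw [haux j k (by omega) (by omega), mul_zero]
      · rw [hBz t j (by omega), zero_mul]
    · rw [hrec t t, if_pos rfl]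
      have : ∑ j, B t j * K j t = 0 := by
        apply Finset.sum_eq_zero
        intro j _
        by_cases hj : (j : ℕ) < (t : ℕ)
        · rw [haux j t (by omega) (by omega), mul_zero]
        · rw [hBz t j (by omega), zero_mul]
      rw [this, add_zero]
    · intro k hk
      have ht1 : 1 ≤ (t : ℕ) := by omega
      have htpos : (0 : ℝ) < ((t : ℕ) : ℝ) := by exact_mod_cast ht1
      have hKkk : K k k = 1 := (ih (k : ℕ) (by omega) k rfl).2.1
      have hKjk : ∀ j : Fin T, (k : ℕ) < (j : ℕ) → (j : ℕ) < (t : ℕ) → |K j k| ≤ P (j : ℕ) :=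
        fun j h1 h2 => (ih (j : ℕ) (by omega) j rfl).2.2 k h1
      have e1 : K t k = ∑ j, B t j * K j k := by
        rw [hrec t k, if_neg (by intro he; rw [he] at hk; omega), zero_add]
      set w : ℕ → ℝ := fun m =>
        (if m = (k : ℕ) then 1 else 0) +
        (if m ∈ Finset.Ico 1 (t : ℕ) ∧ m ≠ (k : ℕ) then P m else 0) with hw
      have hw0 : ∀ m, 0 ≤ w m := by
        intro m
        apply add_nonneg
        · split <;> norm_num
        · split
          · exact hP0 m
          · exact le_rfl
      have hterm : ∀ j : Fin T, |B t j * K j k| ≤ (η / ((t : ℕ) : ℝ)) * w (j : ℕ) := by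
        intro j
        rw [abs_mul]
        by_cases hjk : (j : ℕ) = (k : ℕ)
        · have hj : j = k := Fin.ext hjk
          subst hj
          rw [hKkk, abs_one, mul_one]
          have : w (j : ℕ) = 1 := by
            rw [hw]; simp
          rw [this, mul_one]
          exact hBabs t j
        · rcases lt_or_ge (j : ℕ) (k : ℕ) with h | h
          · rw [haux j k (by omega) h, abs_zero, mul_zero]
            exact mul_nonneg (by positivity) (hw0 _)
          · have hlt : (k : ℕ) < (j : ℕ) := by omega
            by_cases hjt : (j : ℕ) < (t : ℕ)
            · have hwv : w (j : ℕ) = P (j : ℕ) := by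
                rw [hw]
                simp only
                rw [if_neg hjk, if_pos ⟨Finset.mem_Ico.mpr ⟨by omega, hjt⟩, hjk⟩, zero_add]
              rw [hwv]
              exact mul_le_mul (hBabs t j) (hKjk j hlt hjt) (abs_nonneg _) (by positivity)
            · rw [hBz t j (by omega), abs_zero, zero_mul]
              exact mul_nonneg (by positivity) (hw0 _)
      have e3 : ∑ j : Fin T, (η / ((t : ℕ) : ℝ)) * w (j : ℕ)
          = (η / ((t : ℕ) : ℝ)) * ∑ m ∈ Finset.range T, w m := by
        rw [← Finset.mul_sum]
        congr 1
        exact Fin.sum_univ_eq_sum_range (fun m => w m) T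
      have e4 : ∑ m ∈ Finset.range T, w m ≤ 1 + ∑ m ∈ Finset.Ico 1 (t : ℕ), P m := by
        rw [hw]
        rw [Finset.sum_add_distrib]
        have p1 : ∑ m ∈ Finset.range T, (if m = (k : ℕ) then (1:ℝ) else 0) = 1 := by
          rw [Finset.sum_ite_eq' (Finset.range T) (k : ℕ) (fun _ => (1:ℝ))]
          rw [if_pos (Finset.mem_range.mpr k.isLt)]
        have p2 : ∑ m ∈ Finset.range T,
            (if m ∈ Finset.Ico 1 (t : ℕ) ∧ m ≠ (k : ℕ) then P m else 0)
            ≤ ∑ m ∈ Finset.Ico 1 (t : ℕ), P m := by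
          have sub : Finset.Ico 1 (t : ℕ) ⊆ Finset.range T := by
            intro m hm
            rw [Finset.mem_range]
            rw [Finset.mem_Ico] at hm
            omega
          calc ∑ m ∈ Finset.range T,
              (if m ∈ Finset.Ico 1 (t : ℕ) ∧ m ≠ (k : ℕ) then P m else 0)
              ≤ ∑ m ∈ Finset.range T, (if m ∈ Finset.Ico 1 (t : ℕ) then P m else 0) := by
                apply Finset.sum_le_sum
                intro m _
                by_cases hc : m ∈ Finset.Ico 1 (t : ℕ) ∧ m ≠ (k : ℕ)
                · rw [if_pos hc, if_pos hc.1]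
                · rw [if_neg hc]
                  split
                  · exact hP0 m
                  · exact le_rfl
            _ = ∑ m ∈ Finset.range T ∩ Finset.Ico 1 (t : ℕ), P m :=
                Finset.sum_ite_mem _ _ _
            _ = ∑ m ∈ Finset.Ico 1 (t : ℕ), P m := by
                rw [Finset.inter_eq_right.mpr sub]
        linarith [p1, p2]
      have final : |K t k| ≤ P (t : ℕ) := by
        calc |K t k| = |∑ j, B t j * K j k| := by rw [e1]
          _ ≤ ∑ j, |B t j * K j k| := Finset.abs_sum_le_sum_abs _ _
          _ ≤ ∑ j : Fin T, (η / ((t : ℕ) : ℝ)) * w (j : ℕ) :=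
              Finset.sum_le_sum (fun j _ => hterm j)
          _ = (η / ((t : ℕ) : ℝ)) * ∑ m ∈ Finset.range T, w m := e3
          _ ≤ (η / ((t : ℕ) : ℝ)) * (1 + ∑ m ∈ Finset.Ico 1 (t : ℕ), P m) := by
              apply mul_le_mul_of_nonneg_left e4 (by positivity)
          _ = (η / ((t : ℕ) : ℝ)) * ∏ j ∈ Finset.Ico 1 (t : ℕ), (1 + η / (j : ℝ)) := by
              rw [hPsum]
          _ = P (t : ℕ) := rfl
      exact final
  refine ⟨hu, ?_, ?_, ?_⟩
  · intro t; exact (main _ t rfl).2.1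
  · intro t k h; exact (main _ t rfl).1 k h
  · intro t k hk
    have h1 : |K t k| ≤ P (t : ℕ) := (main _ t rfl).2.2 k hk
    have ht1 : 1 ≤ (t : ℕ) := by omega
    have htpos : (0 : ℝ) < ((t : ℕ) : ℝ) := by exact_mod_cast ht1
    have h2 : P (t : ℕ) ≤ η * Real.exp η * ((t : ℕ) : ℝ) ^ (η - 1) := by
      have hp := hprodle (t : ℕ) ht1
      calc P (t : ℕ)
          = (η / ((t : ℕ) : ℝ)) * ∏ j ∈ Finset.Ico 1 (t : ℕ), (1 + η / (j : ℝ)) := rfl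
        _ ≤ (η / ((t : ℕ) : ℝ)) * (Real.exp η * ((t : ℕ) : ℝ) ^ η) :=
            mul_le_mul_of_nonneg_left hp (by positivity)
        _ = η * Real.exp η * (((t : ℕ) : ℝ) ^ η / ((t : ℕ) : ℝ)) := by ring
        _ = η * Real.exp η * ((t : ℕ) : ℝ) ^ (η - 1) := by
            rw [Real.rpow_sub htpos, Real.rpow_one]
    have hdiffpos : (0 : ℝ) < ((t : ℕ) : ℝ) - ((k : ℕ) : ℝ) := by
      have : ((k : ℕ) : ℝ) < ((t : ℕ) : ℝ) := by exact_mod_cast hk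
      linarith
    have h3 : ((t : ℕ) : ℝ) ^ (η - 1) ≤ (((t : ℕ) : ℝ) - ((k : ℕ) : ℝ)) ^ (-β) := by
      have hβ : -β = η - 1 := by rw [hβdef]; ring
      rw [hβ]
      apply Real.rpow_le_rpow_of_nonpos hdiffpos
      · have : (0 : ℝ) ≤ ((k : ℕ) : ℝ) := Nat.cast_nonneg _
        linarith
      · linarith
    calc |K t k| ≤ P (t : ℕ) := h1
      _ ≤ η * Real.exp η * ((t : ℕ) : ℝ) ^ (η - 1) := h2
      _ ≤ η * Real.exp η * (((t : ℕ) : ℝ) - ((k : ℕ) : ℝ)) ^ (-β) := by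
          apply mul_le_mul_of_nonneg_left h3
          positivity
end

section
/- Let β ∈ (0,1) and set C_β := 2^β + 2^β/(1−β). Then for all integers ℓ ≥ 1 and τ ≥ 0, ∑_{k=τ}^{τ+ℓ-1} (τ+ℓ−k)^{−β} · (k+1)^{−1} ≤ C_β · ℓ^{−β} · (1 + log(1+ℓ)). -/
open Real Finset

lemma sum_rpow_neg_le (β : ℝ) (hβ0 : 0 < β) (hβ1 : β < 1) (n : ℕ) :
    ∑ i ∈ Finset.range n, ((i : ℝ) + 1) ^ (-β) ≤ (n : ℝ) ^ (1 - β) / (1 - β) := by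
  have h1β : (0:ℝ) < 1 - β := by linarith
  induction n with
  | zero => simp [Real.zero_rpow (by linarith : (1:ℝ) - β ≠ 0)]
  | succ n ih =>
    rw [Finset.sum_range_succ]
    have hn1 : (0:ℝ) < (n:ℝ) + 1 := by positivity
    have bern : ((n:ℝ)/((n:ℝ)+1)) ^ (1-β) ≤ 1 - (1-β) * (1/((n:ℝ)+1)) := by
      have h1 : (n:ℝ)/((n:ℝ)+1) = 1 + (-(1/((n:ℝ)+1))) := by field_simp; ring
      rw [h1]
      have hs : (-1:ℝ) ≤ -(1/((n:ℝ)+1)) := by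
        have : 1/((n:ℝ)+1) ≤ 1 := by rw [div_le_one hn1]; linarith
        linarith
      have := rpow_one_add_le_one_add_mul_self hs (by linarith : (0:ℝ) ≤ 1-β)
        (by linarith : (1:ℝ)-β ≤ 1)
      linarith [this]
    have hdiv : ((n:ℝ)/((n:ℝ)+1)) ^ (1-β) = (n:ℝ)^(1-β) / ((n:ℝ)+1)^(1-β) :=
      Real.div_rpow (Nat.cast_nonneg n) (le_of_lt hn1) _
    have hpow : (0:ℝ) < ((n:ℝ)+1)^(1-β) := Real.rpow_pos_of_pos hn1 _
    have h2 : ((n:ℝ)+1)^(-β) = ((n:ℝ)+1)^(1-β) / ((n:ℝ)+1) := by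
      rw [show -β = (1-β) - 1 by ring, Real.rpow_sub hn1, Real.rpow_one]
    have key : (n:ℝ)^(1-β) + (1-β) * ((n:ℝ)+1)^(-β) ≤ ((n:ℝ)+1)^(1-β) := by
      have hm := mul_le_mul_of_nonneg_left bern (le_of_lt hpow)
      rw [hdiv, mul_sub, mul_one, mul_div_cancel₀ _ (ne_of_gt hpow)] at hm
      rw [h2]
      have : ((n:ℝ)+1)^(1-β) * ((1-β) * (1/((n:ℝ)+1)))
          = (1-β) * (((n:ℝ)+1)^(1-β) / ((n:ℝ)+1)) := by ring
      rw [this] at hm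
      linarith
    have hstep : ((n:ℝ)+1)^(-β) ≤ (((n:ℝ)+1)^(1-β) - (n:ℝ)^(1-β)) / (1-β) := by
      rw [le_div_iff₀ h1β]; nlinarith
    push_cast
    have hfrac : (n:ℝ)^(1-β)/(1-β) + (((n:ℝ)+1)^(1-β) - (n:ℝ)^(1-β)) / (1-β)
        = ((n:ℝ)+1)^(1-β)/(1-β) := by ring
    linarith

/-- **A convolution bound.**  For `β ∈ (0,1)` and `C_β = 2^β + 2^β/(1−β)`,
for all integers `ℓ ≥ 1` and `τ ≥ 0`,
`∑_{k=τ}^{τ+ℓ−1} (τ+ℓ−k)^{−β}·(k+1)^{−1} ≤ C_β·ℓ^{−β}·(1 + log(1+ℓ))`. -/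
theorem stmt_4
    (β : ℝ) (hβ0 : 0 < β) (hβ1 : β < 1)
    (ℓ τ : ℕ) (hℓ : 1 ≤ ℓ) :
    ∑ k ∈ Finset.Icc τ (τ + ℓ - 1),
        ((τ : ℝ) + (ℓ : ℝ) - (k : ℝ)) ^ (-β) * ((k : ℝ) + 1)⁻¹
      ≤ ((2 : ℝ) ^ β + (2 : ℝ) ^ β / (1 - β)) * (ℓ : ℝ) ^ (-β)
          * (1 + Real.log (1 + (ℓ : ℝ))) := by
  have h1β : (0:ℝ) < 1 - β := by linarith
  have h2β : (1:ℝ) ≤ (2:ℝ)^β := Real.one_le_rpow one_le_two (le_of_lt hβ0)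
  have hℓR : (1:ℝ) ≤ (ℓ:ℝ) := by exact_mod_cast hℓ
  have hℓpos : (0:ℝ) < (ℓ:ℝ) := by linarith
  have hlog2 : (0:ℝ) ≤ Real.log 2 := Real.log_nonneg one_le_two
  rcases eq_or_lt_of_le hℓ with h1 | hℓ2
  · -- ℓ = 1
    subst h1
    have hIcc : Finset.Icc τ (τ + 1 - 1) = {τ} := by
      rw [show τ + 1 - 1 = τ from rfl, Finset.Icc_self]
    rw [hIcc, Finset.sum_singleton]
    have h1' : ((τ:ℝ) + (1:ℕ) - (τ:ℝ)) = 1 := by push_cast; ring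
    rw [h1', Real.one_rpow, one_mul]
    have hτ : ((τ:ℝ) + 1)⁻¹ ≤ 1 := by
      rw [inv_le_one_iff₀]; right; have : (0:ℝ) ≤ (τ:ℝ) := Nat.cast_nonneg τ; linarith
    have hrpow1 : ((1:ℕ):ℝ) ^ (-β) = 1 := by norm_num
    rw [hrpow1]
    have hB : (1:ℝ) ≤ (2:ℝ)^β/(1-β) := by
      rw [le_div_iff₀ h1β]; nlinarith
    have hlog : (0:ℝ) ≤ Real.log (1 + ((1:ℕ):ℝ)) := by
      push_cast; rw [show (1:ℝ)+1 = 2 by norm_num]; exact hlog2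
    nlinarith
  · -- ℓ ≥ 2
    have hℓ2R : (2:ℝ) ≤ (ℓ:ℝ) := by exact_mod_cast hℓ2
    have hIcc : Finset.Icc τ (τ + ℓ - 1) = Finset.Ico τ (τ + ℓ) := by
      rw [← Finset.Ico_add_one_right_eq_Icc]; congr 1; omega
    rw [hIcc, Finset.sum_Ico_eq_sum_range, show τ + ℓ - τ = ℓ by omega]
    have key : ∀ i ∈ Finset.range ℓ,
        ((τ:ℝ) + (ℓ:ℝ) - ((τ + i : ℕ):ℝ)) ^ (-β) * (((τ + i : ℕ):ℝ) + 1)⁻¹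
          ≤ (2:ℝ)^β * (ℓ:ℝ)^(-β) * ((i:ℝ)+1)⁻¹ + (2/(ℓ:ℝ)) * ((ℓ:ℝ) - (i:ℝ))^(-β) := by
      intro i hi
      rw [Finset.mem_range] at hi
      have hiR : (i:ℝ) < (ℓ:ℝ) := by exact_mod_cast hi
      have hτ0 : (0:ℝ) ≤ (τ:ℝ) := Nat.cast_nonneg τ
      push_cast
      rw [show (τ:ℝ) + (ℓ:ℝ) - ((τ:ℝ) + (i:ℝ)) = (ℓ:ℝ) - (i:ℝ) by ring]
      have hx0 : (0:ℝ) < (ℓ:ℝ) - (i:ℝ) := by linarith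
      have hxpos : (0:ℝ) < ((ℓ:ℝ) - (i:ℝ)) ^ (-β) := Real.rpow_pos_of_pos hx0 _
      have hk1 : (0:ℝ) < (τ:ℝ) + (i:ℝ) + 1 := by positivity
      by_cases hc : (ℓ:ℝ)/2 ≤ (ℓ:ℝ) - (i:ℝ)
      · have hb1 : ((ℓ:ℝ) - (i:ℝ)) ^ (-β) ≤ ((ℓ:ℝ)/2) ^ (-β) :=
          Real.rpow_le_rpow_of_nonpos (by linarith) hc (by linarith)
        have hb2 : ((ℓ:ℝ)/2) ^ (-β) = (2:ℝ)^β * (ℓ:ℝ)^(-β) := by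
          rw [Real.div_rpow (le_of_lt hℓpos) (by norm_num : (0:ℝ) ≤ 2),
            Real.rpow_neg (le_of_lt hℓpos), Real.rpow_neg (by norm_num : (0:ℝ) ≤ 2),
            div_eq_mul_inv, inv_inv]
          ring
        have hb3 : ((τ:ℝ) + (i:ℝ) + 1)⁻¹ ≤ ((i:ℝ) + 1)⁻¹ := by
          apply inv_anti₀ (by positivity); linarith
        have hb4 : ((ℓ:ℝ) - (i:ℝ)) ^ (-β) * ((τ:ℝ) + (i:ℝ) + 1)⁻¹
            ≤ (2:ℝ)^β * (ℓ:ℝ)^(-β) * ((i:ℝ)+1)⁻¹ := by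
          apply mul_le_mul (hb2 ▸ hb1) hb3 (by positivity) (by positivity)
        have hb5 : (0:ℝ) ≤ (2/(ℓ:ℝ)) * ((ℓ:ℝ) - (i:ℝ))^(-β) := by positivity
        linarith
      · push_neg at hc
        have hmid : (ℓ:ℝ)/2 ≤ (τ:ℝ) + (i:ℝ) + 1 := by linarith
        have hb1 : ((τ:ℝ) + (i:ℝ) + 1)⁻¹ ≤ ((ℓ:ℝ)/2)⁻¹ :=
          inv_anti₀ (by linarith) hmid
        have hb1' : ((ℓ:ℝ)/2)⁻¹ = 2/(ℓ:ℝ) := by rw [inv_div]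
        have hb4 : ((ℓ:ℝ) - (i:ℝ)) ^ (-β) * ((τ:ℝ) + (i:ℝ) + 1)⁻¹
            ≤ (2/(ℓ:ℝ)) * ((ℓ:ℝ) - (i:ℝ))^(-β) := by
          rw [mul_comm]
          exact mul_le_mul_of_nonneg_right (hb1'  ▸ hb1) (le_of_lt hxpos)
        have hb5 : (0:ℝ) ≤ (2:ℝ)^β * (ℓ:ℝ)^(-β) * ((i:ℝ)+1)⁻¹ := by positivity
        linarith
    refine le_trans (Finset.sum_le_sum key) ?_
    rw [Finset.sum_add_distrib, ← Finset.mul_sum, ← Finset.mul_sum]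
    have hH : ∑ i ∈ Finset.range ℓ, ((i:ℝ)+1)⁻¹ ≤ 1 + Real.log ℓ := by
      have hh := harmonic_le_one_add_log ℓ
      have heq : ((harmonic ℓ : ℚ) : ℝ) = ∑ i ∈ Finset.range ℓ, ((i:ℝ)+1)⁻¹ := by
        rw [harmonic]
        push_cast
        exact Finset.sum_congr rfl fun x _ => by rw [add_comm]
      linarith [heq ▸ hh]
    have hS : ∑ i ∈ Finset.range ℓ, ((ℓ:ℝ) - (i:ℝ))^(-β) ≤ (ℓ:ℝ)^(1-β)/(1-β) := by
      have hrefl : ∑ i ∈ Finset.range ℓ, ((ℓ:ℝ) - (i:ℝ))^(-β)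
          = ∑ i ∈ Finset.range ℓ, ((i:ℝ)+1)^(-β) := by
        rw [← Finset.sum_range_reflect]
        refine Finset.sum_congr rfl fun i hi => ?_
        rw [Finset.mem_range] at hi
        congr 1
        rw [show (ℓ - 1 - i : ℕ) = (ℓ - (i+1) : ℕ) by omega, Nat.cast_sub (by omega)]
        push_cast; ring
      rw [hrefl]
      exact sum_rpow_neg_le β hβ0 hβ1 ℓ
    have hℓpow : (0:ℝ) < (ℓ:ℝ)^(-β) := Real.rpow_pos_of_pos hℓpos _
    have hbound1 : (2:ℝ)^β * (ℓ:ℝ)^(-β) * (∑ i ∈ Finset.range ℓ, ((i:ℝ)+1)⁻¹)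
        ≤ (2:ℝ)^β * (ℓ:ℝ)^(-β) * (1 + Real.log (1 + (ℓ:ℝ))) := by
      apply mul_le_mul_of_nonneg_left _ (by positivity)
      refine hH.trans ?_
      have : Real.log ℓ ≤ Real.log (1 + ℓ) := Real.log_le_log hℓpos (by linarith)
      linarith
    have heq2 : (2/(ℓ:ℝ)) * ((ℓ:ℝ)^(1-β)/(1-β)) = 2*(ℓ:ℝ)^(-β)/(1-β) := by
      have h3 : (ℓ:ℝ)^(1-β) = (ℓ:ℝ) * (ℓ:ℝ)^(-β) := by
        rw [show (1:ℝ)-β = 1 + -β by ring, Real.rpow_add hℓpos, Real.rpow_one]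
      rw [h3]; field_simp
    have hbound2 : (2/(ℓ:ℝ)) * (∑ i ∈ Finset.range ℓ, ((ℓ:ℝ) - (i:ℝ))^(-β))
        ≤ 2*(ℓ:ℝ)^(-β)/(1-β) := by
      refine le_trans (mul_le_mul_of_nonneg_left hS (by positivity)) (le_of_eq heq2)
    have hlog3 : (1:ℝ) ≤ Real.log (1 + (ℓ:ℝ)) := by
      rw [Real.le_log_iff_exp_le (by linarith)]
      calc Real.exp 1 ≤ 2.7182818286 := le_of_lt Real.exp_one_lt_d9
        _ ≤ 1 + (ℓ:ℝ) := by linarith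
    have hfin : 2*(ℓ:ℝ)^(-β)/(1-β)
        ≤ ((2:ℝ)^β/(1-β)) * (ℓ:ℝ)^(-β) * (1 + Real.log (1 + (ℓ:ℝ))) := by
      rw [div_mul_eq_mul_div, div_mul_eq_mul_div, div_le_div_iff₀ h1β h1β]
      have hpos : (0:ℝ) ≤ 1 + Real.log (1 + (ℓ:ℝ)) := by linarith
      have h2le : (0:ℝ) ≤ (2:ℝ)^β * (1 + Real.log (1 + (ℓ:ℝ))) - 2 := by
        nlinarith [mul_nonneg (sub_nonneg.2 h2β) hpos]
      nlinarith [mul_nonneg (mul_nonneg h2le (le_of_lt hℓpow)) (le_of_lt h1β)]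
    calc (2:ℝ)^β * (ℓ:ℝ)^(-β) * (∑ i ∈ Finset.range ℓ, ((i:ℝ)+1)⁻¹)
          + (2/(ℓ:ℝ)) * (∑ i ∈ Finset.range ℓ, ((ℓ:ℝ) - (i:ℝ))^(-β))
        ≤ (2:ℝ)^β * (ℓ:ℝ)^(-β) * (1 + Real.log (1 + (ℓ:ℝ)))
          + ((2:ℝ)^β/(1-β)) * (ℓ:ℝ)^(-β) * (1 + Real.log (1 + (ℓ:ℝ))) := by
          have := hbound2.trans hfin
          linarith
      _ = ((2:ℝ)^β + (2:ℝ)^β/(1-β)) * (ℓ:ℝ)^(-β) * (1 + Real.log (1 + (ℓ:ℝ))) := by ring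
end

section
/- Let γ ∈ (0,1) and set β := 1 − γ. Define y : ℕ → ℝ by y_0 = 1 and y_t = (γ/t) · ∑_{j=0}^{t-1} y_j for t ≥ 1. Then for every integer t ≥ 1, y_t = (γ/Γ(1+γ)) · Γ(t+γ)/Γ(t+1), and consequently (γ/Γ(1+γ)) · (t+1)^{−β} ≤ y_t ≤ (γ/Γ(1+γ)) · t^{−β}. -/
lemma gamma_interp_aux6 {a b l : ℝ} (ha : 0 < a) (hb : 0 < b) (hl : 0 ≤ l) (hl1 : l ≤ 1) :
    Real.Gamma (l*a + (1-l)*b) ≤ Real.Gamma a ^ l * Real.Gamma b ^ (1-l) := by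
  have hmem : a ∈ Set.Ioi (0:ℝ) := ha
  have hmem' : b ∈ Set.Ioi (0:ℝ) := hb
  have hc := Real.convexOn_log_Gamma.2 hmem hmem' hl (show (0:ℝ) ≤ 1 - l by linarith) (by ring)
  simp only [smul_eq_mul] at hc
  have hc' : Real.log (Real.Gamma (l*a + (1-l)*b)) ≤
      l * Real.log (Real.Gamma a) + (1-l) * Real.log (Real.Gamma b) := hc
  have hpos : 0 < l*a + (1-l)*b := by
    rcases hl1.lt_or_eq with h|h
    · exact add_pos_of_nonneg_of_pos (mul_nonneg hl ha.le) (mul_pos (by linarith) hb)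
    · subst h; simpa using ha
  have hG : 0 < Real.Gamma (l*a + (1-l)*b) := Real.Gamma_pos_of_pos hpos
  have hGa : 0 < Real.Gamma a := Real.Gamma_pos_of_pos ha
  have hGb : 0 < Real.Gamma b := Real.Gamma_pos_of_pos hb
  calc Real.Gamma (l*a + (1-l)*b) = Real.exp (Real.log (Real.Gamma (l*a + (1-l)*b))) :=
        (Real.exp_log hG).symm
    _ ≤ Real.exp (l * Real.log (Real.Gamma a) + (1-l) * Real.log (Real.Gamma b)) :=
        Real.exp_le_exp.mpr hc'
    _ = Real.Gamma a ^ l * Real.Gamma b ^ (1-l) := by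
        rw [Real.exp_add, Real.rpow_def_of_pos hGa, Real.rpow_def_of_pos hGb]
        ring_nf

lemma gautschi_upper_aux6 {x γ : ℝ} (hx : 0 < x) (hγ0 : 0 < γ) (hγ1 : γ < 1) :
    Real.Gamma (x + γ) / Real.Gamma (x + 1) ≤ x ^ (γ - 1) := by
  have hGx : 0 < Real.Gamma x := Real.Gamma_pos_of_pos hx
  have hadd : Real.Gamma (x + 1) = x * Real.Gamma x := Real.Gamma_add_one hx.ne'
  have h := gamma_interp_aux6 (add_pos hx one_pos) hx hγ0.le hγ1.le
  have heq : γ * (x+1) + (1-γ) * x = x + γ := by ring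
  rw [heq, hadd] at h
  have h2 : (x * Real.Gamma x) ^ γ * Real.Gamma x ^ (1-γ) = x ^ γ * Real.Gamma x := by
    rw [Real.mul_rpow hx.le hGx.le, mul_assoc, ← Real.rpow_add hGx]
    norm_num
  rw [h2] at h
  rw [div_le_iff₀ (by rw [hadd]; positivity), hadd]
  calc Real.Gamma (x + γ) ≤ x ^ γ * Real.Gamma x := h
    _ = x ^ (γ-1) * (x * Real.Gamma x) := by
        rw [show γ = (γ-1) + 1 by ring, Real.rpow_add hx, Real.rpow_one]; ring

lemma gautschi_lower_aux6 {x γ : ℝ} (hx : 0 < x) (hγ0 : 0 < γ) (hγ1 : γ < 1) :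
    (x + 1) ^ (γ - 1) ≤ Real.Gamma (x + γ) / Real.Gamma (x + 1) := by
  have hxγ : 0 < x + γ := by linarith
  have hG : 0 < Real.Gamma (x + γ) := Real.Gamma_pos_of_pos hxγ
  have hG1 : 0 < Real.Gamma (x + 1) := Real.Gamma_pos_of_pos (by linarith)
  have h := gamma_interp_aux6 hxγ (show (0:ℝ) < x + 1 + γ by linarith) hγ0.le hγ1.le
  have heq : γ * (x+γ) + (1-γ) * (x+1+γ) = x + 1 := by ring
  have hadd : Real.Gamma (x + 1 + γ) = (x+γ) * Real.Gamma (x+γ) := by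
    rw [show x + 1 + γ = (x + γ) + 1 by ring, Real.Gamma_add_one hxγ.ne']
  rw [heq, hadd] at h
  have h2 : Real.Gamma (x+γ) ^ γ * ((x+γ) * Real.Gamma (x+γ)) ^ (1-γ)
      = (x+γ) ^ (1-γ) * Real.Gamma (x+γ) := by
    rw [Real.mul_rpow hxγ.le hG.le, ← mul_assoc, mul_comm (Real.Gamma (x+γ) ^ γ),
      mul_assoc, ← Real.rpow_add hG]
    norm_num
  rw [h2] at h
  have h3 : (x+γ) ^ (1-γ) ≤ (x+1) ^ (1-γ) :=
    Real.rpow_le_rpow hxγ.le (by linarith) (by linarith)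
  have h4 : Real.Gamma (x + 1) ≤ (x+1) ^ (1-γ) * Real.Gamma (x+γ) :=
    h.trans (mul_le_mul_of_nonneg_right h3 hG.le)
  rw [le_div_iff₀ hG1]
  have hx1 : (0:ℝ) < x + 1 := by linarith
  calc (x+1) ^ (γ-1) * Real.Gamma (x+1)
      ≤ (x+1) ^ (γ-1) * ((x+1) ^ (1-γ) * Real.Gamma (x+γ)) := by
        apply mul_le_mul_of_nonneg_left h4 (Real.rpow_nonneg hx1.le _)
    _ = Real.Gamma (x+γ) := by
        rw [← mul_assoc, ← Real.rpow_add hx1]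
        norm_num


/-- **Closed form and tightness under uniform routing.**
For `γ ∈ (0,1)` and `β = 1 − γ`, the impulse response of the uniform-routing
feedback recursion `y 0 = 1`, `y t = (γ/t)·∑_{j<t} y j` satisfies, for all
`t ≥ 1`, `y t = (γ/Γ(1+γ))·Γ(t+γ)/Γ(t+1)`, and consequently
`(γ/Γ(1+γ))·(t+1)^{−β} ≤ y t ≤ (γ/Γ(1+γ))·t^{−β}`. -/
theorem stmt_6
    (γ β : ℝ) (hγ0 : 0 < γ) (hγ1 : γ < 1) (hβdef : β = 1 - γ)
    (y : ℕ → ℝ)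
    (hy0 : y 0 = 1)
    (hyt : ∀ t : ℕ, 1 ≤ t → y t = (γ / (t : ℝ)) * ∑ j ∈ Finset.range t, y j) :
    ∀ t : ℕ, 1 ≤ t →
      y t = (γ / Real.Gamma (1 + γ)) *
          (Real.Gamma ((t : ℝ) + γ) / Real.Gamma ((t : ℝ) + 1)) ∧
      (γ / Real.Gamma (1 + γ)) * ((t : ℝ) + 1) ^ (-β) ≤ y t ∧
      y t ≤ (γ / Real.Gamma (1 + γ)) * (t : ℝ) ^ (-β) := by
  have hG1γ : 0 < Real.Gamma (1 + γ) := Real.Gamma_pos_of_pos (by linarith)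
  have hc : 0 < γ / Real.Gamma (1 + γ) := div_pos hγ0 hG1γ
  -- closed form by induction
  have hcf : ∀ t : ℕ, 1 ≤ t → y t = (γ / Real.Gamma (1 + γ)) *
      (Real.Gamma ((t : ℝ) + γ) / Real.Gamma ((t : ℝ) + 1)) := by
    intro t ht
    induction t, ht using Nat.le_induction with
    | base =>
        have := hyt 1 le_rfl
        simp [Finset.sum_range_one, hy0] at this
        rw [this]
        have : Real.Gamma ((1:ℕ) + γ) = Real.Gamma (1 + γ) := by norm_num
        rw [show ((1:ℕ):ℝ) + 1 = 2 by norm_num, this,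
          show (2:ℝ) = (1:ℝ) + 1 by norm_num, Real.Gamma_add_one one_ne_zero, Real.Gamma_one]
        field_simp
    | succ t ht ih =>
        have htR : (0:ℝ) < t := by exact_mod_cast ht
        -- sum up to t
        have hsum : ∑ j ∈ Finset.range t, y j = (t : ℝ) * y t / γ := by
          have := hyt t ht
          field_simp at this ⊢
          linarith [this]
        have hrec : y (t+1) = y t * ((t:ℝ) + γ) / ((t:ℝ) + 1) := by
          have h := hyt (t+1) (by omega)
          rw [Finset.sum_range_succ, hsum] at h
          push_cast at h
          rw [h]
          field_simp
        have hGt : 0 < Real.Gamma ((t:ℝ) + γ) := Real.Gamma_pos_of_pos (by linarith)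
        have hGt1 : 0 < Real.Gamma ((t:ℝ) + 1) := Real.Gamma_pos_of_pos (by linarith)
        have hA : Real.Gamma (((t:ℕ):ℝ) + 1 + γ) = ((t:ℝ) + γ) * Real.Gamma ((t:ℝ) + γ) := by
          rw [show ((t:ℕ):ℝ) + 1 + γ = ((t:ℝ) + γ) + 1 by ring,
            Real.Gamma_add_one (by positivity)]
        have hB : Real.Gamma (((t:ℕ):ℝ) + 1 + 1) = ((t:ℝ) + 1) * Real.Gamma ((t:ℝ) + 1) := by
          rw [show ((t:ℕ):ℝ) + 1 + 1 = ((t:ℝ) + 1) + 1 by ring,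
            Real.Gamma_add_one (by positivity)]
        rw [hrec, ih]
        push_cast
        rw [hA, hB]
        field_simp
  intro t ht
  have htR : (0:ℝ) < t := by exact_mod_cast ht
  refine ⟨hcf t ht, ?_, ?_⟩
  · have := gautschi_lower_aux6 htR hγ0 hγ1
    rw [hcf t ht, hβdef, show -(1-γ) = γ - 1 by ring]
    exact mul_le_mul_of_nonneg_left this hc.le
  · have := gautschi_upper_aux6 htR hγ0 hγ1
    rw [hcf t ht, hβdef, show -(1-γ) = γ - 1 by ring]
    exact mul_le_mul_of_nonneg_left this hc.le
end

section
/- Let γ ∈ (0,1) and let τ ≥ 0 be an integer. Define y : ℕ → ℝ by y_t = 0 for t < τ, y_τ = 1, and y_t = (γ/t) · ∑_{j=0}^{t-1} y_j for t > τ. Then for every integer ℓ ≥ 1, y_{τ+ℓ} = γ · (Γ(τ+1)/Γ(τ+1+γ)) · (Γ(τ+ℓ+γ)/Γ(τ+ℓ+1)). In particular, y_{τ+1} = γ/(τ+1). -/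
/-- **Uniform routing with an impulse at an arbitrary source position.**
For `γ ∈ (0,1)` and `τ ≥ 0`, the uniform-routing recursion with unit impulse at
time `τ` (`y t = 0` for `t < τ`, `y τ = 1`, `y t = (γ/t)·∑_{j<t} y j` for
`t > τ`) satisfies, for every `ℓ ≥ 1`,
`y (τ+ℓ) = γ·(Γ(τ+1)/Γ(τ+1+γ))·(Γ(τ+ℓ+γ)/Γ(τ+ℓ+1))`; in particular
`y (τ+1) = γ/(τ+1)`. -/
theorem stmt_7
    (γ : ℝ) (hγ0 : 0 < γ) (hγ1 : γ < 1)
    (τ : ℕ)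
    (y : ℕ → ℝ)
    (hy_lt : ∀ t, t < τ → y t = 0)
    (hyτ : y τ = 1)
    (hyt : ∀ t, τ < t → y t = (γ / (t : ℝ)) * ∑ j ∈ Finset.range t, y j) :
    (∀ ℓ : ℕ, 1 ≤ ℓ →
      y (τ + ℓ) = γ * (Real.Gamma ((τ : ℝ) + 1) / Real.Gamma ((τ : ℝ) + 1 + γ)) *
        (Real.Gamma ((τ : ℝ) + (ℓ : ℝ) + γ) / Real.Gamma ((τ : ℝ) + (ℓ : ℝ) + 1))) ∧
    y (τ + 1) = γ / ((τ : ℝ) + 1) := by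
  have hΓτ1 : 0 < Real.Gamma ((τ : ℝ) + 1) :=
    Real.Gamma_pos_of_pos (by positivity)
  have hΓτ1γ : 0 < Real.Gamma ((τ : ℝ) + 1 + γ) :=
    Real.Gamma_pos_of_pos (by positivity)
  set S : ℕ → ℝ := fun t => ∑ j ∈ Finset.range t, y j with hS
  have hS1 : S (τ + 1) = 1 := by
    have h0 : ∀ j ∈ Finset.range τ, y j = 0 :=
      fun j hj => hy_lt j (Finset.mem_range.mp hj)
    simp [hS, Finset.sum_range_succ, Finset.sum_eq_zero h0, hyτ]
  have key : ∀ ℓ : ℕ, 1 ≤ ℓ →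
      S (τ + ℓ) = (Real.Gamma ((τ : ℝ) + 1) / Real.Gamma ((τ : ℝ) + 1 + γ)) *
        (Real.Gamma ((τ : ℝ) + (ℓ : ℝ) + γ) / Real.Gamma ((τ : ℝ) + (ℓ : ℝ))) := by
    intro ℓ hℓ
    induction ℓ with
    | zero => omega
    | succ n ih =>
      rcases Nat.eq_or_lt_of_le hℓ with h1 | h1
      · -- n + 1 = 1, i.e. n = 0
        have hn : n = 0 := by omega
        subst hn
        rw [hS1]
        push_cast
        field_simp
      · -- n ≥ 1
        have hn1 : 1 ≤ n := by omega
        have ihn := ih hn1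
        have hτn : (0 : ℝ) < (τ : ℝ) + (n : ℝ) := by
          have : (1 : ℝ) ≤ (n : ℝ) := by exact_mod_cast hn1
          linarith
        have hΓn : 0 < Real.Gamma ((τ : ℝ) + (n : ℝ)) := Real.Gamma_pos_of_pos hτn
        have hΓnγ : 0 < Real.Gamma ((τ : ℝ) + (n : ℝ) + γ) :=
          Real.Gamma_pos_of_pos (by linarith)
        have hstep : S (τ + (n + 1)) = S (τ + n) + y (τ + n) := by
          have : τ + (n + 1) = (τ + n) + 1 := by omega
          rw [this]
          simp [hS, Finset.sum_range_succ]
        have hyn : y (τ + n) = (γ / ((τ : ℝ) + (n : ℝ))) * S (τ + n) := by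
          have := hyt (τ + n) (by omega)
          rw [this]
          push_cast
          rfl
        have hG1 : Real.Gamma ((τ : ℝ) + (n : ℝ) + γ + 1)
            = ((τ : ℝ) + (n : ℝ) + γ) * Real.Gamma ((τ : ℝ) + (n : ℝ) + γ) :=
          Real.Gamma_add_one (by positivity)
        have hG2 : Real.Gamma ((τ : ℝ) + (n : ℝ) + 1)
            = ((τ : ℝ) + (n : ℝ)) * Real.Gamma ((τ : ℝ) + (n : ℝ)) :=
          Real.Gamma_add_one (ne_of_gt hτn)
        have hcast : (τ : ℝ) + ((n : ℕ) + 1 : ℕ) = (τ : ℝ) + (n : ℝ) + 1 := by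
          push_cast; ring
        rw [hstep, hyn, ihn]
        push_cast
        rw [show (τ : ℝ) + ((n : ℝ) + 1) + γ = (τ : ℝ) + (n : ℝ) + γ + 1 by ring,
          show (τ : ℝ) + ((n : ℝ) + 1) = (τ : ℝ) + (n : ℝ) + 1 by ring, hG1, hG2]
        field_simp
  constructor
  · intro ℓ hℓ
    have hτℓ : (0 : ℝ) < (τ : ℝ) + (ℓ : ℝ) := by
      have : (1 : ℝ) ≤ (ℓ : ℝ) := by exact_mod_cast hℓ
      linarith
    have hΓℓ : 0 < Real.Gamma ((τ : ℝ) + (ℓ : ℝ)) := Real.Gamma_pos_of_pos hτℓ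
    have hG : Real.Gamma ((τ : ℝ) + (ℓ : ℝ) + 1)
        = ((τ : ℝ) + (ℓ : ℝ)) * Real.Gamma ((τ : ℝ) + (ℓ : ℝ)) :=
      Real.Gamma_add_one (ne_of_gt hτℓ)
    have hyℓ : y (τ + ℓ) = (γ / ((τ : ℝ) + (ℓ : ℝ))) * S (τ + ℓ) := by
      have := hyt (τ + ℓ) (by omega)
      rw [this]
      push_cast
      rfl
    rw [hyℓ, key ℓ hℓ, hG]
    field_simp
  · have := hyt (τ + 1) (by omega)
    rw [this, show (∑ j ∈ Finset.range (τ + 1), y j) = S (τ + 1) from rfl, hS1]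
    push_cast
    ring
end

section
/- Fix β ∈ (0,1) and define f_β(n) := n^{−β} for positive integers n. Define the positive-lag convolution (a*b)(n) := ∑_{m=1}^{n-1} a(n−m)·b(m) for n ≥ 2 with (a*b)(1) := 0, and the iterated convolutions f_β^{*1} := f_β, f_β^{*k} := f_β^{*(k−1)} * f_β for k ≥ 2. Then for every fixed integer k ≥ 1 there exist constants c_{k,β}, C_{k,β} ∈ (0,∞) such that for all integers n ≥ k, c_{k,β} · n^{k(1−β)−1} ≤ f_β^{*k}(n) ≤ C_{k,β} · n^{k(1−β)−1}. -/
/-- Positive-lag convolution: `(a*b)(n) = ∑_{m=1}^{n-1} a(n−m)·b(m)` for `n ≥ 2`,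
and `(a*b)(n) = 0` for `n ≤ 1` (the sum over `Finset.Ico 1 n` is empty then). -/
noncomputable def posConv (a b : ℕ → ℝ) : ℕ → ℝ :=
  fun n => ∑ m ∈ Finset.Ico 1 n, a (n - m) * b m

/-- Iterated positive-lag convolution: `iterConv f 1 = f` and
`iterConv f (k+1) = posConv (iterConv f k) f`; the value at `0` is junk. -/
noncomputable def iterConv (f : ℕ → ℝ) : ℕ → ℕ → ℝ
  | 0 => fun _ => 0
  | 1 => f
  | (k + 2) => posConv (iterConv f (k + 1)) f

lemma iterConv_succ (f : ℕ → ℝ) (k : ℕ) (hk : 1 ≤ k) :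
    iterConv f (k + 1) = posConv (iterConv f k) f := by
  obtain ⟨j, rfl⟩ := Nat.exists_eq_add_of_le hk
  rw [add_comm 1 j]
  rfl

lemma iterConv_nonneg {f : ℕ → ℝ} (hf : ∀ m, 0 ≤ f m) : ∀ k n, 0 ≤ iterConv f k n := by
  intro k
  induction k with
  | zero => intro n; simp [iterConv]
  | succ k ih =>
    cases k with
    | zero => intro n; exact hf n
    | succ k =>
      intro n
      show 0 ≤ posConv (iterConv f (k + 1)) f n
      exact Finset.sum_nonneg fun m _ => mul_nonneg (ih _) (hf m)

lemma iterConv_eq_zero {f : ℕ → ℝ} (hf0 : f 0 = 0) : ∀ k n, n < k → iterConv f k n = 0 := by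
  intro k
  induction k with
  | zero => intro n hn; omega
  | succ k ih =>
    cases k with
    | zero => intro n hn; interval_cases n; exact hf0
    | succ k =>
      intro n hn
      show posConv (iterConv f (k + 1)) f n = 0
      apply Finset.sum_eq_zero
      intro m hm
      rw [Finset.mem_Ico] at hm
      rw [ih (n - m) (by omega), zero_mul]

lemma iterConv_pos {β : ℝ} (hβ : β ≠ 0) :
    ∀ k, 1 ≤ k → ∀ n, k ≤ n → 0 < iterConv (fun m => (m : ℝ) ^ (-β)) k n := by
  intro k
  induction k with
  | zero => omega
  | succ k ih =>
    cases k with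
    | zero =>
      intro _ n hn
      exact Real.rpow_pos_of_pos (by exact_mod_cast hn) _
    | succ k =>
      intro _ n hn
      show 0 < posConv (iterConv (fun m => (m : ℝ) ^ (-β)) (k + 1)) _ n
      apply Finset.sum_pos'
      · intro m _
        exact mul_nonneg (iterConv_nonneg (fun m => Real.rpow_nonneg m.cast_nonneg _) _ _)
          (Real.rpow_nonneg (Nat.cast_nonneg _) _)
      · refine ⟨1, Finset.mem_Ico.2 ⟨le_refl 1, by omega⟩, ?_⟩
        have h1 : 0 < iterConv (fun m => (m : ℝ) ^ (-β)) (k + 1) (n - 1) :=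
          ih (by omega) (n - 1) (by omega)
        have h2 : (0:ℝ) < ((1:ℕ):ℝ) ^ (-β) := by
          norm_num
        positivity

lemma sum_reflect (n : ℕ) (g : ℕ → ℝ) :
    ∑ m ∈ Finset.Ico 1 n, g (n - m) = ∑ m ∈ Finset.Ico 1 n, g m := by
  apply Finset.sum_nbij' (fun m => n - m) (fun m => n - m)
  · intro a ha; rw [Finset.mem_Ico] at *; omega
  · intro a ha; rw [Finset.mem_Ico] at *; omega
  · intro a ha; rw [Finset.mem_Ico] at ha; omega
  · intro a ha; rw [Finset.mem_Ico] at ha; omega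
  · intro a ha; rfl

lemma sum_rpow_le {p : ℝ} (hp : -1 < p) (n : ℕ) :
    ∑ m ∈ Finset.Ico 1 n, (m : ℝ) ^ p ≤ (1 + 1 / (p + 1)) * (n : ℝ) ^ (p + 1) := by
  have hp1 : 0 < p + 1 := by linarith
  rcases Nat.lt_or_ge n 2 with hn2 | hn2
  · -- n = 0 or 1 : empty sum
    interval_cases n <;> simp [le_div_iff₀, hp1] <;> positivity
  have hnpos : (0:ℝ) < n := by positivity
  have hn1 : (1:ℝ) ≤ (n:ℝ) := by exact_mod_cast Nat.one_le_iff_ne_zero.2 (by omega)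
  have hge1 : (1:ℝ) ≤ (n:ℝ) ^ (p + 1) := Real.one_le_rpow hn1 hp1.le
  rcases le_or_gt 0 p with hp0 | hp0
  · -- p ≥ 0 : crude bound
    calc ∑ m ∈ Finset.Ico 1 n, (m : ℝ) ^ p
        ≤ ∑ _m ∈ Finset.Ico 1 n, (n : ℝ) ^ p := by
          apply Finset.sum_le_sum
          intro m hm
          rw [Finset.mem_Ico] at hm
          exact Real.rpow_le_rpow (Nat.cast_nonneg _) (by exact_mod_cast hm.2.le) hp0
      _ = ((n - 1 : ℕ) : ℝ) * (n : ℝ) ^ p := by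
          rw [Finset.sum_const, Nat.card_Ico, nsmul_eq_mul]
      _ ≤ (n : ℝ) * (n : ℝ) ^ p := by
          apply mul_le_mul_of_nonneg_right _ (Real.rpow_nonneg hnpos.le _)
          exact_mod_cast Nat.sub_le n 1
      _ = (n : ℝ) ^ (p + 1) := by
          rw [add_comm, Real.rpow_add hnpos, Real.rpow_one]
      _ ≤ (1 + 1 / (p + 1)) * (n : ℝ) ^ (p + 1) := by
          nlinarith [Real.rpow_nonneg hnpos.le (p+1), div_pos one_pos hp1]
  · -- -1 < p < 0 : integral comparison
    have hsplit : ∑ m ∈ Finset.Ico (1:ℕ) 2, (m:ℝ) ^ p + ∑ m ∈ Finset.Ico 2 n, (m:ℝ) ^ p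
        = ∑ m ∈ Finset.Ico 1 n, (m:ℝ) ^ p :=
      Finset.sum_Ico_consecutive _ (by norm_num) hn2
    have h1 : ∑ m ∈ Finset.Ico (1:ℕ) 2, (m:ℝ) ^ p = 1 := by simp
    have hanti : AntitoneOn (fun x : ℝ => x ^ p) (Set.Icc (1:ℝ) (1 + (n - 2 : ℕ))) := by
      intro x hx y hy hxy
      exact Real.rpow_le_rpow_of_nonpos (lt_of_lt_of_le one_pos hx.1) hxy hp0.le
    have hint := hanti.sum_le_integral
    have hrw : ∑ i ∈ Finset.range (n - 2), ((1:ℝ) + ((i + 1 : ℕ):ℝ)) ^ p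
        = ∑ m ∈ Finset.Ico 2 n, (m:ℝ) ^ p := by
      rw [Finset.sum_Ico_eq_sum_range]
      apply Finset.sum_congr rfl
      intro i _
      push_cast
      ring_nf
    have hval : ∫ x in (1:ℝ)..(1 + (n - 2 : ℕ)), x ^ p
        = (((1:ℝ) + (n - 2 : ℕ)) ^ (p + 1) - 1 ^ (p + 1)) / (p + 1) :=
      integral_rpow (Or.inl hp)
    have hle : ((1:ℝ) + ((n - 2 : ℕ):ℝ)) ≤ (n : ℝ) := by
      have : ((n - 2 : ℕ):ℝ) = (n:ℝ) - 2 := by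
        push_cast [Nat.cast_sub hn2]; ring
      rw [this]; linarith
    have hint2 : ∑ m ∈ Finset.Ico 2 n, (m:ℝ) ^ p ≤ (n:ℝ) ^ (p + 1) / (p + 1) := by
      rw [← hrw]
      refine le_trans hint ?_
      rw [hval, Real.one_rpow]
      have ha : (0:ℝ) ≤ (1:ℝ) + ((n - 2 : ℕ):ℝ) := by positivity
      have : ((1:ℝ) + ((n - 2 : ℕ):ℝ)) ^ (p + 1) ≤ (n:ℝ) ^ (p + 1) :=
        Real.rpow_le_rpow ha hle hp1.le
      gcongr
      linarith
    calc ∑ m ∈ Finset.Ico 1 n, (m : ℝ) ^ p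
        = 1 + ∑ m ∈ Finset.Ico 2 n, (m:ℝ) ^ p := by rw [← hsplit, h1]
      _ ≤ 1 + (n:ℝ) ^ (p + 1) / (p + 1) := by linarith
      _ ≤ (1 + 1 / (p + 1)) * (n : ℝ) ^ (p + 1) := by
          rw [add_mul, one_mul, div_mul_eq_mul_div, one_mul]
          linarith

lemma half_rpow {x : ℝ} (hx : 0 ≤ x) (y : ℝ) : (x / 2) ^ y = x ^ y * 2 ^ (-y) := by
  rw [Real.div_rpow hx (by norm_num), Real.rpow_neg (by norm_num), div_eq_mul_inv]

lemma rpow_sandwich {α x n : ℝ} (hx1 : n / 2 ≤ x) (hx2 : x ≤ n) (hn : 0 < n) :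
    min 1 ((2:ℝ) ^ (-α)) * n ^ α ≤ x ^ α ∧
      x ^ α ≤ max 1 ((2:ℝ) ^ (-α)) * n ^ α := by
  have hhalf : (0:ℝ) < n / 2 := by linarith
  have hx0 : (0:ℝ) < x := lt_of_lt_of_le hhalf hx1
  have hna : (0:ℝ) ≤ n ^ α := Real.rpow_nonneg hn.le _
  have hhr : (n / 2) ^ α = n ^ α * 2 ^ (-α) := half_rpow hn.le α
  rcases le_or_gt 0 α with hα | hα
  · constructor
    · calc min 1 ((2:ℝ) ^ (-α)) * n ^ α ≤ (2:ℝ) ^ (-α) * n ^ α := by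
            exact mul_le_mul_of_nonneg_right (min_le_right _ _) hna
        _ = (n / 2) ^ α := by rw [hhr]; ring
        _ ≤ x ^ α := Real.rpow_le_rpow hhalf.le hx1 hα
    · calc x ^ α ≤ n ^ α := Real.rpow_le_rpow hx0.le hx2 hα
        _ ≤ max 1 ((2:ℝ) ^ (-α)) * n ^ α := by
            nlinarith [le_max_left (1:ℝ) ((2:ℝ) ^ (-α))]
  · constructor
    · calc min 1 ((2:ℝ) ^ (-α)) * n ^ α ≤ 1 * n ^ α := by
            exact mul_le_mul_of_nonneg_right (min_le_left _ _) hna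
        _ = n ^ α := one_mul _
        _ ≤ x ^ α := Real.rpow_le_rpow_of_nonpos hx0 hx2 hα.le
    · calc x ^ α ≤ (n / 2) ^ α := Real.rpow_le_rpow_of_nonpos hhalf hx1 hα.le
        _ = (2:ℝ) ^ (-α) * n ^ α := by rw [hhr]; ring
        _ ≤ max 1 ((2:ℝ) ^ (-α)) * n ^ α := by
            exact mul_le_mul_of_nonneg_right (le_max_right _ _) hna

/-- **Heavy-tail convolution class.**  Fix `β ∈ (0,1)` and `f_β(n) = n^{−β}`.
For every fixed `k ≥ 1` there exist constants `c, C ∈ (0,∞)` such that for all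
`n ≥ k`, `c·n^{k(1−β)−1} ≤ f_β^{*k}(n) ≤ C·n^{k(1−β)−1}`. -/
theorem stmt_9
    (β : ℝ) (hβ0 : 0 < β) (hβ1 : β < 1)
    (k : ℕ) (hk : 1 ≤ k) :
    ∃ c C : ℝ, 0 < c ∧ 0 < C ∧
      ∀ n : ℕ, k ≤ n →
        c * (n : ℝ) ^ ((k : ℝ) * (1 - β) - 1)
            ≤ iterConv (fun m => (m : ℝ) ^ (-β)) k n ∧
        iterConv (fun m => (m : ℝ) ^ (-β)) k n
            ≤ C * (n : ℝ) ^ ((k : ℝ) * (1 - β) - 1) := by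
  set f : ℕ → ℝ := fun m => (m : ℝ) ^ (-β) with hf
  have hf0 : f 0 = 0 := by
    simp only [hf, Nat.cast_zero]
    exact Real.zero_rpow (by linarith)
  have hfnn : ∀ m, 0 ≤ f m := fun m => Real.rpow_nonneg (Nat.cast_nonneg m) _
  induction k, hk using Nat.le_induction with
  | base =>
    refine ⟨1, 1, one_pos, one_pos, fun n hn => ?_⟩
    have he : ((1:ℕ) : ℝ) * (1 - β) - 1 = -β := by push_cast; ring
    rw [he, one_mul]
    exact ⟨le_refl _, le_refl _⟩
  | succ k hk1 IH =>
    obtain ⟨c, C, hc, hC, hIH⟩ := IH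
    set α : ℝ := (k : ℝ) * (1 - β) - 1 with hα
    have hkR : (1:ℝ) ≤ (k:ℝ) := by exact_mod_cast hk1
    have h1β : (0:ℝ) < 1 - β := by linarith
    have hα1 : -1 < α := by nlinarith
    have hβ1' : (-1:ℝ) < -β := by linarith
    set K : ℝ := max 1 ((2:ℝ) ^ (-α)) with hK
    have hK1 : (1:ℝ) ≤ K := le_max_left _ _
    have hK0 : (0:ℝ) < K := lt_of_lt_of_le one_pos hK1
    set K' : ℝ := min 1 ((2:ℝ) ^ (-α)) with hK'
    have hK'0 : (0:ℝ) < K' := lt_min one_pos (Real.rpow_pos_of_pos two_pos _)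
    set Dα : ℝ := 1 + 1 / (α + 1) with hDα
    set Dβ : ℝ := 1 + 1 / (-β + 1) with hDβ
    have hDα0 : 0 < Dα := by
      have h' : (0:ℝ) < α + 1 := by linarith
      have : 0 < 1 / (α + 1) := by positivity
      simp only [hDα]; linarith
    have hDβ0 : 0 < Dβ := by
      have h' : (0:ℝ) < -β + 1 := by linarith
      have : 0 < 1 / (-β + 1) := by positivity
      simp only [hDβ]; linarith
    have h2β : (0:ℝ) < (2:ℝ) ^ β := Real.rpow_pos_of_pos two_pos _
    set C' : ℝ := C * ((2:ℝ) ^ β * Dα + K * Dβ) with hC'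
    have hC'0 : 0 < C' := by positivity
    set c₁ : ℝ := c * K' * (4:ℝ) ^ (β - 1) with hc₁
    have hc₁0 : 0 < c₁ := by positivity
    have he : (((k:ℕ) + 1 : ℕ) : ℝ) * (1 - β) - 1 = α + 1 - β := by push_cast [hα]; ring
    -- Upper bound, for all n ≥ 2
    have hup : ∀ n : ℕ, 2 ≤ n →
        posConv (iterConv f k) f n ≤ C' * (n : ℝ) ^ (α + 1 - β) := by
      intro n hn2
      have hnR : (0:ℝ) < n := by
        have : 1 ≤ n := by omega
        exact_mod_cast this
      have step1 : posConv (iterConv f k) f n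
          ≤ C * ∑ m ∈ Finset.Ico 1 n, ((n - m : ℕ) : ℝ) ^ α * (m : ℝ) ^ (-β) := by
        rw [Finset.mul_sum]
        apply Finset.sum_le_sum
        intro m hm
        rw [Finset.mem_Ico] at hm
        have hnm1 : 1 ≤ n - m := by omega
        have h1 : iterConv f k (n - m) ≤ C * ((n - m : ℕ) : ℝ) ^ α := by
          rcases le_or_gt k (n - m) with h | h
          · exact (hIH _ h).2
          · rw [iterConv_eq_zero hf0 k _ h]
            have : (0:ℝ) < ((n - m : ℕ) : ℝ) := by exact_mod_cast hnm1
            positivity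
        calc iterConv f k (n - m) * f m ≤ (C * ((n - m : ℕ) : ℝ) ^ α) * f m :=
              mul_le_mul_of_nonneg_right h1 (hfnn m)
          _ = C * (((n - m : ℕ) : ℝ) ^ α * (m : ℝ) ^ (-β)) := by rw [hf]; ring
      have step2 : ∀ m ∈ Finset.Ico 1 n,
          ((n - m : ℕ) : ℝ) ^ α * (m : ℝ) ^ (-β)
            ≤ (2:ℝ) ^ β * (n:ℝ) ^ (-β) * ((n - m : ℕ) : ℝ) ^ α
              + K * (n:ℝ) ^ α * (m : ℝ) ^ (-β) := by
        intro m hm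
        rw [Finset.mem_Ico] at hm
        have hmR : (0:ℝ) < m := by exact_mod_cast hm.1
        have hnmcast : ((n - m : ℕ) : ℝ) = (n:ℝ) - (m:ℝ) := by
          push_cast [Nat.cast_sub hm.2.le]; ring
        have hnm0 : (0:ℝ) < ((n - m : ℕ) : ℝ) := by
          have : 1 ≤ n - m := by omega
          exact_mod_cast this
        have ha : (0:ℝ) ≤ ((n - m : ℕ) : ℝ) ^ α := Real.rpow_nonneg hnm0.le _
        have hb : (0:ℝ) ≤ (m : ℝ) ^ (-β) := Real.rpow_nonneg hmR.le _
        have hcase : n ≤ 2 * m ∨ n ≤ 2 * (n - m) := by omega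
        rcases hcase with hcase | hcase
        · have hm2 : (n:ℝ) / 2 ≤ (m:ℝ) := by
            have : (n:ℝ) ≤ 2 * (m:ℝ) := by exact_mod_cast hcase
            linarith
          have hb2 : (m:ℝ) ^ (-β) ≤ ((n:ℝ) / 2) ^ (-β) :=
            Real.rpow_le_rpow_of_nonpos (by linarith) hm2 (by linarith)
          have hhr : ((n:ℝ) / 2) ^ (-β) = (n:ℝ) ^ (-β) * 2 ^ β := by
            rw [half_rpow hnR.le, neg_neg]
          have : ((n - m : ℕ) : ℝ) ^ α * (m : ℝ) ^ (-β)
              ≤ (2:ℝ) ^ β * (n:ℝ) ^ (-β) * ((n - m : ℕ) : ℝ) ^ α := by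
            calc ((n - m : ℕ) : ℝ) ^ α * (m : ℝ) ^ (-β)
                ≤ ((n - m : ℕ) : ℝ) ^ α * (((n:ℝ)) ^ (-β) * 2 ^ β) := by
                  rw [← hhr]; exact mul_le_mul_of_nonneg_left hb2 ha
              _ = (2:ℝ) ^ β * (n:ℝ) ^ (-β) * ((n - m : ℕ) : ℝ) ^ α := by ring
          have hT2 : (0:ℝ) ≤ K * (n:ℝ) ^ α * (m : ℝ) ^ (-β) :=
            mul_nonneg (mul_nonneg hK0.le (Real.rpow_nonneg hnR.le α)) hb
          linarith
        · have ha2 : (n:ℝ) / 2 ≤ ((n - m : ℕ) : ℝ) := by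
            rw [hnmcast]
            have : (n:ℝ) ≤ 2 * ((n:ℝ) - (m:ℝ)) := by
              have := hcase
              have hcast : ((n - m : ℕ) : ℝ) = (n:ℝ) - (m:ℝ) := hnmcast
              have : (n:ℝ) ≤ 2 * ((n - m : ℕ) : ℝ) := by exact_mod_cast hcase
              linarith [hcast ▸ this]
            linarith
          have ha3 : ((n - m : ℕ) : ℝ) ≤ (n:ℝ) := by
            rw [hnmcast]; linarith
          have := (rpow_sandwich (α := α) ha2 ha3 hnR).2
          have h4 : ((n - m : ℕ) : ℝ) ^ α * (m : ℝ) ^ (-β) ≤ K * (n:ℝ) ^ α * (m : ℝ) ^ (-β) := by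
            rw [hK]
            exact mul_le_mul_of_nonneg_right this hb
          have hT1 : (0:ℝ) ≤ (2:ℝ) ^ β * (n:ℝ) ^ (-β) * ((n - m : ℕ) : ℝ) ^ α :=
            mul_nonneg (mul_nonneg h2β.le (Real.rpow_nonneg hnR.le (-β))) ha
          linarith
      have step3 : ∑ m ∈ Finset.Ico 1 n, ((n - m : ℕ) : ℝ) ^ α * (m : ℝ) ^ (-β)
          ≤ (2:ℝ) ^ β * (n:ℝ) ^ (-β) * (∑ m ∈ Finset.Ico 1 n, (m:ℝ) ^ α)
            + K * (n:ℝ) ^ α * (∑ m ∈ Finset.Ico 1 n, (m:ℝ) ^ (-β)) := by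
        calc ∑ m ∈ Finset.Ico 1 n, ((n - m : ℕ) : ℝ) ^ α * (m : ℝ) ^ (-β)
            ≤ ∑ m ∈ Finset.Ico 1 n, ((2:ℝ) ^ β * (n:ℝ) ^ (-β) * ((n - m : ℕ) : ℝ) ^ α
              + K * (n:ℝ) ^ α * (m : ℝ) ^ (-β)) := Finset.sum_le_sum step2
          _ = (2:ℝ) ^ β * (n:ℝ) ^ (-β) * (∑ m ∈ Finset.Ico 1 n, ((n - m : ℕ) : ℝ) ^ α)
              + K * (n:ℝ) ^ α * (∑ m ∈ Finset.Ico 1 n, (m:ℝ) ^ (-β)) := by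
            rw [Finset.sum_add_distrib, Finset.mul_sum, Finset.mul_sum]
          _ = _ := by rw [sum_reflect n (fun j => (j:ℝ) ^ α)]
      have step4 : (2:ℝ) ^ β * (n:ℝ) ^ (-β) * (∑ m ∈ Finset.Ico 1 n, (m:ℝ) ^ α)
            + K * (n:ℝ) ^ α * (∑ m ∈ Finset.Ico 1 n, (m:ℝ) ^ (-β))
          ≤ (2:ℝ) ^ β * (n:ℝ) ^ (-β) * (Dα * (n:ℝ) ^ (α + 1))
            + K * (n:ℝ) ^ α * (Dβ * (n:ℝ) ^ (-β + 1)) := by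
        have h1 := sum_rpow_le hα1 n
        have h2 := sum_rpow_le hβ1' n
        have p1 : (0:ℝ) ≤ (2:ℝ) ^ β * (n:ℝ) ^ (-β) := by positivity
        have p2 : (0:ℝ) ≤ K * (n:ℝ) ^ α := by positivity
        exact add_le_add (mul_le_mul_of_nonneg_left h1 p1) (mul_le_mul_of_nonneg_left h2 p2)
      have hmul1 : (n:ℝ) ^ (-β) * (n:ℝ) ^ (α + 1) = (n:ℝ) ^ (α + 1 - β) := by
        rw [← Real.rpow_add hnR]; congr 1; ring
      have hmul2 : (n:ℝ) ^ α * (n:ℝ) ^ (-β + 1) = (n:ℝ) ^ (α + 1 - β) := by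
        rw [← Real.rpow_add hnR]; congr 1; ring
      calc posConv (iterConv f k) f n
          ≤ C * ∑ m ∈ Finset.Ico 1 n, ((n - m : ℕ) : ℝ) ^ α * (m : ℝ) ^ (-β) := step1
        _ ≤ C * ((2:ℝ) ^ β * (n:ℝ) ^ (-β) * (Dα * (n:ℝ) ^ (α + 1))
            + K * (n:ℝ) ^ α * (Dβ * (n:ℝ) ^ (-β + 1))) :=
            mul_le_mul_of_nonneg_left (le_trans step3 step4) hC.le
        _ = C' * (n : ℝ) ^ (α + 1 - β) := by
            rw [hC']
            linear_combination (C * (2:ℝ) ^ β * Dα) * hmul1 + (C * K * Dβ) * hmul2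
    -- Lower bound for n ≥ 2(k+1)
    have hlow : ∀ n : ℕ, 2 * (k + 1) ≤ n →
        c₁ * (n : ℝ) ^ (α + 1 - β) ≤ posConv (iterConv f k) f n := by
      intro n hn
      set M : ℕ := n / 2 with hM
      have hMk : k + 1 ≤ M := by omega
      have hMn : M + 1 ≤ n := by omega
      have hnR : (0:ℝ) < n := by
        have : 1 ≤ n := by omega
        exact_mod_cast this
      have hMR : (0:ℝ) < M := by
        have : 1 ≤ M := by omega
        exact_mod_cast this
      have hM4 : (n:ℝ) ≤ 4 * (M:ℝ) := by exact_mod_cast (by omega : n ≤ 4 * M)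
      have hM2 : (M:ℝ) ≤ (n:ℝ) / 2 := by
        have : 2 * M ≤ n := by omega
        have h2 : (2:ℝ) * (M:ℝ) ≤ (n:ℝ) := by exact_mod_cast this
        linarith
      have key : ∀ m ∈ Finset.Ico 1 (M + 1),
          c * (K' * (n:ℝ) ^ α) * (M:ℝ) ^ (-β) ≤ iterConv f k (n - m) * f m := by
        intro m hm
        rw [Finset.mem_Ico] at hm
        have hm1 : 1 ≤ m := hm.1
        have hmM : m ≤ M := by omega
        have hkm : k ≤ n - m := by omega
        have hmR : (0:ℝ) < m := by exact_mod_cast hm1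
        have hnmcast : ((n - m : ℕ) : ℝ) = (n:ℝ) - (m:ℝ) := by
          push_cast [Nat.cast_sub (by omega : m ≤ n)]; ring
        have hmhalf : (m:ℝ) ≤ (n:ℝ) / 2 := by
          have : (m:ℝ) ≤ (M:ℝ) := by exact_mod_cast hmM
          linarith
        have ha2 : (n:ℝ) / 2 ≤ ((n - m : ℕ) : ℝ) := by rw [hnmcast]; linarith
        have ha3 : ((n - m : ℕ) : ℝ) ≤ (n:ℝ) := by rw [hnmcast]; linarith
        have hsand := (rpow_sandwich (α := α) ha2 ha3 hnR).1
        have hbb : (M:ℝ) ^ (-β) ≤ (m:ℝ) ^ (-β) :=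
          Real.rpow_le_rpow_of_nonpos hmR (by exact_mod_cast hmM) (by linarith)
        have hIHl : c * ((n - m : ℕ) : ℝ) ^ α ≤ iterConv f k (n - m) := (hIH _ hkm).1
        calc c * (K' * (n:ℝ) ^ α) * (M:ℝ) ^ (-β)
            ≤ c * ((n - m : ℕ) : ℝ) ^ α * (M:ℝ) ^ (-β) := by
              apply mul_le_mul_of_nonneg_right _ (Real.rpow_nonneg hMR.le _)
              exact mul_le_mul_of_nonneg_left hsand hc.le
          _ ≤ iterConv f k (n - m) * (M:ℝ) ^ (-β) :=
              mul_le_mul_of_nonneg_right hIHl (Real.rpow_nonneg hMR.le _)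
          _ ≤ iterConv f k (n - m) * (m:ℝ) ^ (-β) :=
              mul_le_mul_of_nonneg_left hbb (iterConv_nonneg hfnn _ _)
          _ = iterConv f k (n - m) * f m := rfl
      have hsum : ∑ m ∈ Finset.Ico 1 (M + 1), (c * (K' * (n:ℝ) ^ α) * (M:ℝ) ^ (-β))
          ≤ posConv (iterConv f k) f n := by
        calc ∑ m ∈ Finset.Ico 1 (M + 1), (c * (K' * (n:ℝ) ^ α) * (M:ℝ) ^ (-β))
            ≤ ∑ m ∈ Finset.Ico 1 (M + 1), iterConv f k (n - m) * f m :=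
              Finset.sum_le_sum key
          _ ≤ ∑ m ∈ Finset.Ico 1 n, iterConv f k (n - m) * f m := by
              apply Finset.sum_le_sum_of_subset_of_nonneg
                (Finset.Ico_subset_Ico le_rfl hMn)
              intro m _ _
              exact mul_nonneg (iterConv_nonneg hfnn _ _) (hfnn m)
          _ = posConv (iterConv f k) f n := rfl
      have hcount : ∑ m ∈ Finset.Ico 1 (M + 1), (c * (K' * (n:ℝ) ^ α) * (M:ℝ) ^ (-β))
          = (M:ℝ) * (c * (K' * (n:ℝ) ^ α) * (M:ℝ) ^ (-β)) := by
        rw [Finset.sum_const, Nat.card_Ico, nsmul_eq_mul]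
        norm_num
      have hfinal : c₁ * (n : ℝ) ^ (α + 1 - β)
          ≤ (M:ℝ) * (c * (K' * (n:ℝ) ^ α) * (M:ℝ) ^ (-β)) := by
        have hM1β : ((n:ℝ) / 4) ^ (1 - β) ≤ (M:ℝ) ^ (1 - β) :=
          Real.rpow_le_rpow (by positivity) (by linarith) h1β.le
        have hq : ((n:ℝ) / 4) ^ (1 - β) = (n:ℝ) ^ (1 - β) * (4:ℝ) ^ (β - 1) := by
          rw [Real.div_rpow hnR.le (by norm_num : (0:ℝ) ≤ 4),
            show (1 - β) = -(β - 1) by ring,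
            Real.rpow_neg (by norm_num : (0:ℝ) ≤ 4), div_inv_eq_mul]
        have hMsplit : (M:ℝ) * (M:ℝ) ^ (-β) = (M:ℝ) ^ (1 - β) := by
          nth_rewrite 1 [← Real.rpow_one (M:ℝ)]
          rw [← Real.rpow_add hMR, sub_eq_add_neg]
        have hnsplit : (n:ℝ) ^ (α + 1 - β) = (n:ℝ) ^ α * (n:ℝ) ^ (1 - β) := by
          rw [← Real.rpow_add hnR]; congr 1; ring
        calc c₁ * (n : ℝ) ^ (α + 1 - β)
            = c * K' * ((n:ℝ) ^ (1 - β) * (4:ℝ) ^ (β - 1)) * (n:ℝ) ^ α := by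
              rw [hc₁, hnsplit]; ring
          _ = c * K' * ((n:ℝ) / 4) ^ (1 - β) * (n:ℝ) ^ α := by rw [hq]
          _ ≤ c * K' * (M:ℝ) ^ (1 - β) * (n:ℝ) ^ α := by
              apply mul_le_mul_of_nonneg_right _ (Real.rpow_nonneg hnR.le _)
              exact mul_le_mul_of_nonneg_left hM1β (by positivity)
          _ = (M:ℝ) * (c * (K' * (n:ℝ) ^ α) * (M:ℝ) ^ (-β)) := by
              rw [← hMsplit]; ring
      exact le_trans (hfinal.trans (le_of_eq hcount.symm)) hsum
    -- combine
    set E : Finset ℕ := Finset.Ico (k + 1) (2 * (k + 1)) with hE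
    have hEne : E.Nonempty := ⟨k + 1, by rw [hE, Finset.mem_Ico]; omega⟩
    set c₂ : ℝ := E.inf' hEne (fun j => iterConv f (k + 1) j * (j:ℝ) ^ (-(α + 1 - β))) with hc₂
    have hc₂0 : 0 < c₂ := by
      rw [hc₂, Finset.lt_inf'_iff]
      intro j hj
      rw [hE, Finset.mem_Ico] at hj
      have hj0 : (0:ℝ) < j := by
        have : 1 ≤ j := by omega
        exact_mod_cast this
      exact mul_pos (iterConv_pos (by linarith : β ≠ 0) (k+1) (by omega) j hj.1)
        (Real.rpow_pos_of_pos hj0 _)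
    refine ⟨min c₁ c₂, C', lt_min hc₁0 hc₂0, hC'0, fun n hn => ?_⟩
    have hnR : (0:ℝ) < n := by
      have : 1 ≤ n := by omega
      exact_mod_cast this
    rw [he]
    have hrec : iterConv f (k + 1) n = posConv (iterConv f k) f n := by
      rw [iterConv_succ f k hk1]
    constructor
    · rcases le_or_gt (2 * (k + 1)) n with hcase | hcase
      · calc min c₁ c₂ * (n:ℝ) ^ (α + 1 - β) ≤ c₁ * (n:ℝ) ^ (α + 1 - β) := by
              exact mul_le_mul_of_nonneg_right (min_le_left _ _) (Real.rpow_nonneg hnR.le _)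
          _ ≤ posConv (iterConv f k) f n := hlow n hcase
          _ = iterConv f (k + 1) n := hrec.symm
      · have hnE : n ∈ E := by rw [hE, Finset.mem_Ico]; omega
        have hinf : c₂ ≤ iterConv f (k + 1) n * (n:ℝ) ^ (-(α + 1 - β)) := by
          rw [hc₂]; exact Finset.inf'_le _ hnE
        calc min c₁ c₂ * (n:ℝ) ^ (α + 1 - β) ≤ c₂ * (n:ℝ) ^ (α + 1 - β) := by
              exact mul_le_mul_of_nonneg_right (min_le_right _ _) (Real.rpow_nonneg hnR.le _)
          _ ≤ iterConv f (k + 1) n * (n:ℝ) ^ (-(α + 1 - β)) * (n:ℝ) ^ (α + 1 - β) :=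
              mul_le_mul_of_nonneg_right hinf (Real.rpow_nonneg hnR.le _)
          _ = iterConv f (k + 1) n := by
              rw [mul_assoc, ← Real.rpow_add hnR, neg_add_cancel, Real.rpow_zero, mul_one]
    · rw [hrec]
      exact hup n (by omega)
end

section
/- Let E be a real normed vector space, let n ≥ 1, let z₀ ∈ E, and let β : E → ℝ^n be Fréchet differentiable at z₀. Define α : E → ℝ^n by α(z) = softmax(β(z)), i.e. α_j(z) = exp(β_j(z))/∑_{i=1}^n exp(β_i(z)). Then ∑_{j=1}^{n} ‖Dα_j(z₀)‖ ≤ 2 · ∑_{ℓ=1}^{n} α_ℓ(z₀) · ‖Dβ_ℓ(z₀)‖, where Dα_j(z₀) and Dβ_ℓ(z₀) denote the Fréchet derivatives at z₀ (bounded linear functionals E → ℝ) and ‖·‖ is the operator norm. -/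
/-- **Softmax row derivative: total variation bound.**
Let `E` be a real normed space, let `β : Fin n → E → ℝ` be Fréchet
differentiable at `z₀`, and let `α j z = exp(β j z)/∑_i exp(β i z)` be the
softmax row.  Then `∑_j ‖Dα_j(z₀)‖ ≤ 2·∑_ℓ α_ℓ(z₀)·‖Dβ_ℓ(z₀)‖`, where the
derivatives are Fréchet derivatives (bounded linear functionals `E → ℝ`) and
`‖·‖` is the operator norm. -/
theorem stmt_14
    {E : Type*} [NormedAddCommGroup E] [NormedSpace ℝ E]
    (n : ℕ) (hn : 1 ≤ n) (z₀ : E)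
    (β : Fin n → E → ℝ) (hβ : ∀ j, DifferentiableAt ℝ (β j) z₀)
    (α : Fin n → E → ℝ)
    (hα : ∀ j z, α j z = Real.exp (β j z) / ∑ i, Real.exp (β i z)) :
    ∑ j, ‖fderiv ℝ (α j) z₀‖ ≤ 2 * ∑ l, α l z₀ * ‖fderiv ℝ (β l) z₀‖ := by
  haveI : Nonempty (Fin n) := ⟨⟨0, hn⟩⟩
  set D : Fin n → E →L[ℝ] ℝ := fun j => fderiv ℝ (β j) z₀ with hD
  set b : Fin n → ℝ := fun j => Real.exp (β j z₀) with hb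
  set S : ℝ := ∑ i, b i with hSdef
  have hSpos : 0 < S := Finset.sum_pos (fun i _ => Real.exp_pos _) Finset.univ_nonempty
  have hbpos : ∀ j, 0 < b j := fun j => Real.exp_pos _
  -- derivative of the denominator
  have hg : HasFDerivAt (fun z => ∑ i, Real.exp (β i z)) (∑ i, b i • D i) z₀ :=
    HasFDerivAt.fun_sum fun i _ => (hβ i).hasFDerivAt.exp
  set T : E →L[ℝ] ℝ := ∑ i, b i • D i with hT
  -- derivative of the inverse of the denominator
  have hinv : HasFDerivAt (fun z => (∑ i, Real.exp (β i z))⁻¹) ((-(S ^ 2)⁻¹) • T) z₀ := by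
    have := (hasDerivAt_inv hSpos.ne').comp_hasFDerivAt z₀ hg
    exact this
  -- derivative of α j
  have hαj : ∀ j, HasFDerivAt (α j)
      (b j • ((-(S ^ 2)⁻¹) • T) + S⁻¹ • (b j • D j)) z₀ := by
    intro j
    have h1 : HasFDerivAt (fun z => Real.exp (β j z)) (b j • D j) z₀ :=
      (hβ j).hasFDerivAt.exp
    have h2 := h1.mul hinv
    have : α j = fun z => Real.exp (β j z) * (∑ i, Real.exp (β i z))⁻¹ := by
      funext z; rw [hα j z, div_eq_mul_inv]
    rw [this]
    exact h2
  have hαval : ∀ j, α j z₀ = b j / S := fun j => hα j z₀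
  -- bound for T
  have hTnorm : ‖T‖ ≤ ∑ i, b i * ‖D i‖ := by
    refine le_trans (norm_sum_le _ _) (Finset.sum_le_sum fun i _ => ?_)
    have h := norm_smul (α := ℝ) (β := E →L[ℝ] ℝ) (b i) (D i)
    rw [h, Real.norm_eq_abs, abs_of_pos (hbpos i)]
  -- bound each term
  have key : ∀ j, ‖fderiv ℝ (α j) z₀‖ ≤
      α j z₀ * ‖D j‖ + α j z₀ * (S⁻¹ * ∑ i, b i * ‖D i‖) := by
    intro j
    rw [(hαj j).fderiv]
    calc ‖b j • ((-(S ^ 2)⁻¹) • T) + S⁻¹ • (b j • D j)‖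
        ≤ ‖b j • ((-(S ^ 2)⁻¹) • T)‖ + ‖S⁻¹ • (b j • D j)‖ := norm_add_le _ _
      _ = b j * ((S ^ 2)⁻¹ * ‖T‖) + S⁻¹ * (b j * ‖D j‖) := by
          have h1 := norm_smul (α := ℝ) (β := E →L[ℝ] ℝ) (b j) ((-(S ^ 2)⁻¹) • T)
          have h2 := norm_smul (α := ℝ) (β := E →L[ℝ] ℝ) (-(S ^ 2)⁻¹) T
          have h3 := norm_smul (α := ℝ) (β := E →L[ℝ] ℝ) S⁻¹ (b j • D j)
          have h4 := norm_smul (α := ℝ) (β := E →L[ℝ] ℝ) (b j) (D j)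
          rw [h1, h2, h3, h4]
          simp only [norm_neg, norm_inv, Real.norm_eq_abs,
            abs_of_pos (hbpos j), abs_of_pos hSpos, abs_of_pos (pow_pos hSpos 2)]
      _ ≤ b j * ((S ^ 2)⁻¹ * ∑ i, b i * ‖D i‖) + S⁻¹ * (b j * ‖D j‖) := by
          gcongr
      _ = α j z₀ * ‖D j‖ + α j z₀ * (S⁻¹ * ∑ i, b i * ‖D i‖) := by
          rw [hαval j]
          field_simp
          ring
  calc ∑ j, ‖fderiv ℝ (α j) z₀‖
      ≤ ∑ j, (α j z₀ * ‖D j‖ + α j z₀ * (S⁻¹ * ∑ i, b i * ‖D i‖)) :=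
        Finset.sum_le_sum fun j _ => key j
    _ = (∑ j, α j z₀ * ‖D j‖) + (∑ j, α j z₀) * (S⁻¹ * ∑ i, b i * ‖D i‖) := by
        rw [Finset.sum_add_distrib, Finset.sum_mul]
    _ = 2 * ∑ l, α l z₀ * ‖D l‖ := by
        have hsum1 : (∑ j, α j z₀) = 1 := by
          simp only [hαval]
          rw [← Finset.sum_div, ← hSdef, div_self hSpos.ne']
        have hsum2 : S⁻¹ * ∑ i, b i * ‖D i‖ = ∑ l, α l z₀ * ‖D l‖ := by
          rw [Finset.mul_sum]
          refine Finset.sum_congr rfl fun l _ => ?_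
          rw [hαval l, div_eq_mul_inv]
          ring
        rw [hsum1, one_mul, hsum2]
        ring
end

section
/- Let (X,d) be a metric space in which, for every compact set K ⊆ X and every ρ > 0, the closed ρ-neighborhood {x ∈ X : d(x,K) ≤ ρ} is compact. Fix a compact set K₁ ⊆ X, continuous maps f_1,…,f_L : X → X, and ρ > 0, and define recursively K̃₁ := K₁, K_{i+1} := f_i(K̃_i), and K̃_{i+1} := {x : d(x, K_{i+1}) ≤ ρ}. Then each K̃_i is compact, and for every ε > 0 there exist δ_1,…,δ_L ∈ (0, ρ] such that: for any continuous maps g_i : K̃_i → X satisfying sup_{x∈K̃_i} d(f_i(x), g_i(x)) ≤ δ_i for each i, one has g_i(K̃_i) ⊆ K̃_{i+1} for each i (so the composition G := g_L∘⋯∘g_1 is well defined on K₁), and sup_{x∈K₁} d((f_L∘⋯∘f_1)(x), (g_L∘⋯∘g_1)(x)) ≤ ε. -/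
/-- Closed `ρ`-neighborhood (thickening) of a set. -/
def thick {X : Type*} [MetricSpace X] (ρ : ℝ) (K : Set X) : Set X :=
  {x | Metric.infDist x K ≤ ρ}

/-- The thickened compacts of the composition lemma:
`Ktilde 0 = K₁` and `Ktilde (i+1) = thick ρ (f i '' Ktilde i)`
(so `Ktilde i` is `K̃_{i+1}` in one-based notation). -/
def Ktilde {X : Type*} [MetricSpace X] (f : ℕ → X → X) (ρ : ℝ) (K₁ : Set X) :
    ℕ → Set X
  | 0 => K₁
  | i + 1 => thick ρ (f i '' Ktilde f ρ K₁ i)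

/-- `compUpTo f i = f_{i-1} ∘ ⋯ ∘ f_0` (identity for `i = 0`). -/
def compUpTo {X : Type*} (f : ℕ → X → X) : ℕ → X → X
  | 0 => id
  | i + 1 => fun x => f i (compUpTo f i x)

lemma image_subset_thick {X : Type*} [MetricSpace X] {ρ : ℝ} {S : Set X} {f g : X → X}
    (h : ∀ x ∈ S, dist (f x) (g x) ≤ ρ) : g '' S ⊆ thick ρ (f '' S) := by
  rintro _ ⟨x, hx, rfl⟩
  calc Metric.infDist (g x) (f '' S) ≤ dist (g x) (f x) :=
        Metric.infDist_le_dist_of_mem (Set.mem_image_of_mem f hx)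
    _ ≤ ρ := by rw [dist_comm]; exact h x hx

lemma mem_Ktilde {X : Type*} [MetricSpace X] {f g : ℕ → X → X} {ρ : ℝ} {K₁ : Set X}
    (i : ℕ) (hsub : ∀ j, j < i → g j '' Ktilde f ρ K₁ j ⊆ Ktilde f ρ K₁ (j + 1))
    {x : X} (hx : x ∈ K₁) : compUpTo g i x ∈ Ktilde f ρ K₁ i := by
  induction i with
  | zero => exact hx
  | succ i ih =>
    exact hsub i (Nat.lt_succ_self i)
      (Set.mem_image_of_mem _ (ih (fun j hj => hsub j (hj.trans (Nat.lt_succ_self i)))))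

lemma Ktilde_compact {X : Type*} [MetricSpace X]
    (hX : ∀ K : Set X, IsCompact K → ∀ ρ : ℝ, 0 < ρ →
      IsCompact {x | Metric.infDist x K ≤ ρ})
    {K₁ : Set X} (hK₁ : IsCompact K₁) {f : ℕ → X → X} {ρ : ℝ} (hρ : 0 < ρ) :
    ∀ i, (∀ j, j < i → Continuous (f j)) → IsCompact (Ktilde f ρ K₁ i) := by
  intro i
  induction i with
  | zero => intro _; exact hK₁
  | succ i ih =>
    intro hf
    exact hX _ ((ih (fun j hj => hf j (hj.trans (Nat.lt_succ_self i)))).image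
      (hf i (Nat.lt_succ_self i))) ρ hρ

lemma stmt_18_aux {X : Type*} [MetricSpace X]
    (hX : ∀ K : Set X, IsCompact K → ∀ ρ : ℝ, 0 < ρ →
      IsCompact {x | Metric.infDist x K ≤ ρ})
    {K₁ : Set X} (hK₁ : IsCompact K₁) (f : ℕ → X → X) {ρ : ℝ} (hρ : 0 < ρ) :
    ∀ L : ℕ, (∀ i, i < L → Continuous (f i)) → ∀ ε : ℝ, 0 < ε →
      ∃ δ : ℕ → ℝ, (∀ i, i < L → 0 < δ i ∧ δ i ≤ ρ) ∧
      ∀ g : ℕ → X → X,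
        (∀ i, i < L → ∀ x ∈ Ktilde f ρ K₁ i, dist (f i x) (g i x) ≤ δ i) →
        ∀ x ∈ K₁, dist (compUpTo f L x) (compUpTo g L x) ≤ ε := by
  intro L
  induction L with
  | zero =>
    intro _ ε hε
    exact ⟨fun _ => ρ, fun i hi => ⟨hρ, le_refl ρ⟩,
      fun g _ x _ => by simpa [compUpTo] using hε.le⟩
  | succ L ih =>
    intro hf ε hε
    have hKL : IsCompact (Ktilde f ρ K₁ L) :=
      Ktilde_compact hX hK₁ hρ L (fun j hj => hf j (hj.trans (Nat.lt_succ_self L)))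
    have hfc : Continuous (f L) := hf L (Nat.lt_succ_self L)
    have huc : UniformContinuousOn (f L) (Ktilde f ρ K₁ L) :=
      hKL.uniformContinuousOn_of_continuous hfc.continuousOn
    rw [Metric.uniformContinuousOn_iff] at huc
    obtain ⟨η, hη, hηc⟩ := huc (ε / 2) (by positivity)
    obtain ⟨δ, hδ, hδg⟩ := ih (fun i hi => hf i (hi.trans (Nat.lt_succ_self L)))
      (min (η / 2) ρ) (by positivity)
    refine ⟨fun i => if i = L then min (ε / 2) ρ else δ i, ?_, ?_⟩
    · intro i hi
      by_cases h : i = L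
      · simp only [h, if_pos rfl]
        exact ⟨lt_min (by positivity) hρ, min_le_right _ _⟩
      · have hiL : i < L := lt_of_le_of_ne (Nat.lt_succ_iff.mp hi) h
        simpa [h] using hδ i hiL
    · intro g hg x hx
      have hgL : ∀ i, i < L → ∀ y ∈ Ktilde f ρ K₁ i, dist (f i y) (g i y) ≤ δ i := by
        intro i hi y hy
        have := hg i (hi.trans (Nat.lt_succ_self L)) y hy
        simpa [Nat.ne_of_lt hi] using this
      have hd := hδg g hgL x hx
      have hsub : ∀ j, j < L → g j '' Ktilde f ρ K₁ j ⊆ Ktilde f ρ K₁ (j + 1) := by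
        intro j hj
        exact image_subset_thick (fun y hy => (hgL j hj y hy).trans (hδ j hj).2)
      have hsubf : ∀ j, j < L → f j '' Ktilde f ρ K₁ j ⊆ Ktilde f ρ K₁ (j + 1) := by
        intro j hj
        exact image_subset_thick (f := f j) (fun y hy => by simpa using hρ.le)
      have hFmem : compUpTo f L x ∈ Ktilde f ρ K₁ L := mem_Ktilde L hsubf hx
      have hGmem : compUpTo g L x ∈ Ktilde f ρ K₁ L := mem_Ktilde L hsub hx
      have h1 : dist (f L (compUpTo f L x)) (f L (compUpTo g L x)) ≤ ε / 2 :=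
        le_of_lt (hηc _ hFmem _ hGmem
          (lt_of_le_of_lt hd (lt_of_le_of_lt (min_le_left _ _) (half_lt_self hη))))
      have h2 : dist (f L (compUpTo g L x)) (g L (compUpTo g L x)) ≤ ε / 2 := by
        have := hg L (Nat.lt_succ_self L) _ hGmem
        simp only [if_pos rfl] at this
        exact this.trans (min_le_left _ _)
      calc dist (compUpTo f (L + 1) x) (compUpTo g (L + 1) x)
          = dist (f L (compUpTo f L x)) (g L (compUpTo g L x)) := by simp [compUpTo]
        _ ≤ dist (f L (compUpTo f L x)) (f L (compUpTo g L x))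
            + dist (f L (compUpTo g L x)) (g L (compUpTo g L x)) := dist_triangle _ _ _
        _ ≤ ε / 2 + ε / 2 := add_le_add h1 h2
        _ = ε := by ring


/-- **Composition error on thickened compacts.**
Let `X` be a metric space in which closed `ρ`-neighborhoods of compact sets are
compact.  Fix a compact `K₁`, continuous maps `f_0, …, f_{L-1}`, and `ρ > 0`,
and define the thickened compacts `K̃_i` recursively.  Then each `K̃_i` is
compact, and for every `ε > 0` there are tolerances `δ_i ∈ (0, ρ]` such that
any continuous maps `g_i` with `sup_{x ∈ K̃_i} d(f_i x, g_i x) ≤ δ_i` satisfy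
`g_i(K̃_i) ⊆ K̃_{i+1}` (so the composition is well defined) and
`sup_{x ∈ K₁} d((f_{L-1} ∘ ⋯ ∘ f_0) x, (g_{L-1} ∘ ⋯ ∘ g_0) x) ≤ ε`. -/
theorem stmt_18
    {X : Type*} [MetricSpace X]
    (hX : ∀ K : Set X, IsCompact K → ∀ ρ : ℝ, 0 < ρ →
      IsCompact {x | Metric.infDist x K ≤ ρ})
    (K₁ : Set X) (hK₁ : IsCompact K₁)
    (L : ℕ) (hL : 1 ≤ L)
    (f : ℕ → X → X) (hf : ∀ i, i < L → Continuous (f i))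
    (ρ : ℝ) (hρ : 0 < ρ) :
    (∀ i, i ≤ L → IsCompact (Ktilde f ρ K₁ i)) ∧
    ∀ ε : ℝ, 0 < ε → ∃ δ : ℕ → ℝ,
      (∀ i, i < L → 0 < δ i ∧ δ i ≤ ρ) ∧
      ∀ g : ℕ → X → X,
        (∀ i, i < L → ContinuousOn (g i) (Ktilde f ρ K₁ i)) →
        (∀ i, i < L → ∀ x ∈ Ktilde f ρ K₁ i, dist (f i x) (g i x) ≤ δ i) →
        (∀ i, i < L → g i '' Ktilde f ρ K₁ i ⊆ Ktilde f ρ K₁ (i + 1)) ∧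
        ∀ x ∈ K₁, dist (compUpTo f L x) (compUpTo g L x) ≤ ε := by
  constructor
  · intro i hi
    exact Ktilde_compact hX hK₁ hρ i (fun j hj => hf j (hj.trans_le hi))
  · intro ε hε
    obtain ⟨δ, hδ, hδg⟩ := stmt_18_aux hX hK₁ f hρ L hf ε hε
    refine ⟨δ, hδ, fun g _ hg => ⟨?_, hδg g hg⟩⟩
    intro i hi
    exact image_subset_thick (fun y hy => (hg i hi y hy).trans (hδ i hi).2)
end
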